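/- arXiv:2401.14689 — 9 statements merged into one kernel-verified Lean document; each statement's English description precedes it below -/
import Mathlib

section
/- Under Assumption H and with μ₀, μ₊, μ₋ as in the context, the following are equivalent: (i) for every δ' ∈ (0,δ₀) and ε' ∈ (0,ε₁) there exists (μ,ε) with |μ − μ̄| < δ' and 0 < |ε| < ε' such that the matrix L(μ,ε) has an eigenvalue with nonzero real part; (ii) the real analytic function ε ↦ β(μ₀(ε),ε) is not identically zero on (−ε₁,ε₁); (iii) there exists n ∈ ℕ such that the n-th derivative of ε ↦ β(μ₀(ε),ε) at ε = 0 is nonzero. -/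
open Matrix Set

noncomputable def Jmat : Matrix (Fin 2) (Fin 2) ℂ := !![-Complex.I, 0; 0, Complex.I]

noncomputable def Bmat (a b c : ℝ) : Matrix (Fin 2) (Fin 2) ℂ :=
  !![(a : ℂ), Complex.I * (b : ℂ); -Complex.I * (b : ℂ), (c : ℂ)]

/-- The 2×2 Hamiltonian and reversible matrix `L = J ⬝ B`. -/
noncomputable def Lmat (a b c : ℝ) : Matrix (Fin 2) (Fin 2) ℂ := Jmat * Bmat a b c

/-- `l` is an eigenvalue of `M`, i.e. a root of its characteristic polynomial. -/
def IsEig (M : Matrix (Fin 2) (Fin 2) ℂ) (l : ℂ) : Prop := (Matrix.charpoly M).IsRoot l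

/-- Assumption H: expansions of the real analytic entries `α, β, γ` of the matrix `B(μ,ε)`
around `(μ̄, 0)`, with `T₁ = α₁ + γ₁ > 0`. -/
structure AssumptionH (μb ωs δ₀ ε₀ : ℝ) (α β γ : ℝ → ℝ → ℝ)
    (α₁ α₂ β₁ β₂ β₃ γ₁ γ₂ : ℝ) : Prop where
  hδ₀ : 0 < δ₀
  hε₀ : 0 < ε₀
  hα_an : AnalyticOnNhd ℝ (fun p : ℝ × ℝ => α p.1 p.2)
    (Ioo (μb - δ₀) (μb + δ₀) ×ˢ Ioo (-ε₀) ε₀)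
  hβ_an : AnalyticOnNhd ℝ (fun p : ℝ × ℝ => β p.1 p.2)
    (Ioo (μb - δ₀) (μb + δ₀) ×ˢ Ioo (-ε₀) ε₀)
  hγ_an : AnalyticOnNhd ℝ (fun p : ℝ × ℝ => γ p.1 p.2)
    (Ioo (μb - δ₀) (μb + δ₀) ×ˢ Ioo (-ε₀) ε₀)
  hT₁ : 0 < α₁ + γ₁
  hexp : ∃ α₀ γ₀ : ℝ → ℝ, ∃ d ∈ Ioc (0 : ℝ) δ₀, ∃ e ∈ Ioc (0 : ℝ) ε₀, ∃ C : ℝ, 0 < C ∧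
    AnalyticOnNhd ℝ α₀ (Ioo (-d) d) ∧ AnalyticOnNhd ℝ γ₀ (Ioo (-d) d) ∧
    ∀ δ ε : ℝ, |δ| < d → |ε| < e →
      |α (μb + δ) ε - (-(α₀ δ) + α₂ * ε ^ 2)| ≤ C * (|ε| ^ 3 + |δ| * ε ^ 2 + δ ^ 2 * |ε|) ∧
      |β (μb + δ) ε - (β₁ * ε ^ 2 + β₂ * δ * ε ^ 2 + β₃ * ε ^ 4)| ≤
        C * (|ε| ^ 5 + |δ| * |ε| ^ 3 + δ ^ 2 * ε ^ 2 + |δ| ^ 3 * |ε|) ∧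
      |γ (μb + δ) ε - (γ₀ δ + γ₂ * ε ^ 2)| ≤ C * (|ε| ^ 3 + |δ| * ε ^ 2 + δ ^ 2 * |ε|) ∧
      |α₀ δ - (ωs - α₁ * δ)| ≤ C * δ ^ 2 ∧
      |γ₀ δ - (ωs + γ₁ * δ)| ≤ C * δ ^ 2

/-- The graphs of the real analytic functions `μ₀, μ₊, μ₋` are exactly the zero sets of
`T = α + γ`, `d₊ = T + 2β`, `d₋ = T - 2β` in `(μ̄-δ₀,μ̄+δ₀) × (-ε₁,ε₁)`, with the sign
of these functions positive above the respective graph and negative below it. -/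
structure ZeroCurves (μb δ₀ : ℝ) (α β γ : ℝ → ℝ → ℝ) (ε₁ : ℝ)
    (μ₀ μp μm : ℝ → ℝ) : Prop where
  hμ₀_an : AnalyticOnNhd ℝ μ₀ (Ioo (-ε₁) ε₁)
  hμp_an : AnalyticOnNhd ℝ μp (Ioo (-ε₁) ε₁)
  hμm_an : AnalyticOnNhd ℝ μm (Ioo (-ε₁) ε₁)
  hmaps₀ : ∀ ε ∈ Ioo (-ε₁) ε₁, μ₀ ε ∈ Ioo (μb - δ₀) (μb + δ₀)
  hmapsp : ∀ ε ∈ Ioo (-ε₁) ε₁, μp ε ∈ Ioo (μb - δ₀) (μb + δ₀)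
  hmapsm : ∀ ε ∈ Ioo (-ε₁) ε₁, μm ε ∈ Ioo (μb - δ₀) (μb + δ₀)
  hT : ∀ μ ∈ Ioo (μb - δ₀) (μb + δ₀), ∀ ε ∈ Ioo (-ε₁) ε₁,
    (α μ ε + γ μ ε = 0 ↔ μ = μ₀ ε) ∧
    (μ₀ ε < μ → 0 < α μ ε + γ μ ε) ∧ (μ < μ₀ ε → α μ ε + γ μ ε < 0)
  hdp : ∀ μ ∈ Ioo (μb - δ₀) (μb + δ₀), ∀ ε ∈ Ioo (-ε₁) ε₁,
    (α μ ε + γ μ ε + 2 * β μ ε = 0 ↔ μ = μp ε) ∧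
    (μp ε < μ → 0 < α μ ε + γ μ ε + 2 * β μ ε) ∧ (μ < μp ε → α μ ε + γ μ ε + 2 * β μ ε < 0)
  hdm : ∀ μ ∈ Ioo (μb - δ₀) (μb + δ₀), ∀ ε ∈ Ioo (-ε₁) ε₁,
    (α μ ε + γ μ ε - 2 * β μ ε = 0 ↔ μ = μm ε) ∧
    (μm ε < μ → 0 < α μ ε + γ μ ε - 2 * β μ ε) ∧ (μ < μm ε → α μ ε + γ μ ε - 2 * β μ ε < 0)

/- ### Auxiliary lemmas -/

lemma Lmat_eq (a b c : ℝ) : Lmat a b c = !![-Complex.I * a, (b:ℂ); (b:ℂ), Complex.I * c] := by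
  rw [Lmat, Jmat, Bmat]
  ext i j
  fin_cases i <;> fin_cases j <;>
    simp [Matrix.mul_apply, Fin.sum_univ_two, Complex.ext_iff]

lemma isEig_iff (a b c : ℝ) (l : ℂ) :
    IsEig (Lmat a b c) l ↔ (l - (-Complex.I * a)) * (l - Complex.I * c) - (b:ℂ) * b = 0 := by
  rw [IsEig, Matrix.charpoly, Matrix.det_fin_two, Lmat_eq]
  simp [Matrix.charmatrix_apply, Polynomial.IsRoot.def]

lemma eig_re_iff (a b c : ℝ) :
    (∃ l : ℂ, IsEig (Lmat a b c) l ∧ l.re ≠ 0) ↔ (a+c+2*b)*(a+c-2*b) < 0 := by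
  constructor
  · rintro ⟨l, hl, hre⟩
    rw [isEig_iff] at hl
    obtain ⟨x, y⟩ := l
    simp only [Complex.ext_iff, Complex.mul_re, Complex.mul_im, Complex.sub_re, Complex.sub_im,
      Complex.neg_re, Complex.neg_im, Complex.I_re, Complex.I_im, Complex.ofReal_re,
      Complex.ofReal_im, Complex.zero_re, Complex.zero_im] at hl hre
    obtain ⟨h1, h2⟩ := hl
    have hy : 2*y + (a - c) = 0 := by
      rcases mul_eq_zero.1 (show x * (2*y + (a-c)) = 0 by nlinarith) with h | h
      · exact absurd h hre
      · exact h
    have hx2 : 0 < x^2 := by positivity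
    nlinarith [hx2, hy, h1]
  · intro h
    have hDpos : 0 < 4*b^2 - (a+c)^2 := by nlinarith
    have hs : Real.sqrt (4*b^2 - (a+c)^2) ^ 2 = 4*b^2 - (a+c)^2 := Real.sq_sqrt hDpos.le
    have hspos : 0 < Real.sqrt (4*b^2 - (a+c)^2) := Real.sqrt_pos.2 hDpos
    refine ⟨(Real.sqrt (4*b^2 - (a+c)^2) / 2 : ℝ) + ((c-a)/2 : ℝ) * Complex.I, ?_, ?_⟩
    · rw [isEig_iff]
      apply Complex.ext <;>
        simp only [Complex.add_re, Complex.add_im, Complex.mul_re, Complex.mul_im,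
          Complex.sub_re, Complex.sub_im, Complex.neg_re, Complex.neg_im, Complex.I_re,
          Complex.I_im, Complex.ofReal_re, Complex.ofReal_im, Complex.zero_re,
          Complex.zero_im] <;>
        nlinarith [hs]
    · simp only [Complex.add_re, Complex.mul_re, Complex.I_re, Complex.I_im,
        Complex.ofReal_re, Complex.ofReal_im]
      intro hcon
      nlinarith [hspos]

lemma eventually_zero_of_derivs_zero {f : ℝ → ℝ} (hf : AnalyticAt ℝ f 0)
    (h : ∀ n, iteratedDeriv n f 0 = 0) : f =ᶠ[nhds 0] 0 := by
  obtain ⟨p, r, hp⟩ := hf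
  have hball : ∀ y ∈ EMetric.ball (0:ℝ) r, f y = 0 := by
    intro y hy
    have hsum := hp.hasSum_iteratedFDeriv hy
    have hterm : ∀ n : ℕ, (n.factorial : ℝ)⁻¹ • iteratedFDeriv ℝ n f 0 (fun _ => y) = 0 := by
      intro n
      have h2 := (iteratedFDeriv ℝ n f 0).map_smul_univ (fun _ : Fin n => y) (fun _ => (1:ℝ))
      simp only [smul_eq_mul, mul_one, Finset.prod_const, Finset.card_univ,
        Fintype.card_fin] at h2
      rw [h2, ← iteratedDeriv_eq_iteratedFDeriv, h n, mul_zero, smul_zero]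
    have hzero : f (0 + y) = 0 := hsum.unique (by simp only [hterm]; exact hasSum_zero)
    simpa using hzero
  exact Filter.eventually_of_mem (EMetric.ball_mem_nhds _ hp.r_pos)
    (fun x hx => by simpa using hball x hx)

lemma iteratedDeriv_zero_fun (n : ℕ) : iteratedDeriv n (0 : ℝ → ℝ) 0 = 0 := by
  have h : deriv (0 : ℝ → ℝ) = 0 := by
    funext x
    exact deriv_const x 0
  rw [iteratedDeriv_eq_iterate, Function.iterate_fixed h, Pi.zero_apply]

theorem stmt3 (μb ωs δ₀ ε₀ : ℝ) (α β γ : ℝ → ℝ → ℝ) (α₁ α₂ β₁ β₂ β₃ γ₁ γ₂ : ℝ)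
    (hH : AssumptionH μb ωs δ₀ ε₀ α β γ α₁ α₂ β₁ β₂ β₃ γ₁ γ₂)
    (ε₁ : ℝ) (hε₁ : ε₁ ∈ Ioc (0 : ℝ) ε₀) (μ₀ μp μm : ℝ → ℝ)
    (hZ : ZeroCurves μb δ₀ α β γ ε₁ μ₀ μp μm) :
    -- (i) ↔ (ii)
    ((∀ δ' ∈ Ioo (0 : ℝ) δ₀, ∀ ε' ∈ Ioo (0 : ℝ) ε₁, ∃ μ ε : ℝ,
        |μ - μb| < δ' ∧ 0 < |ε| ∧ |ε| < ε' ∧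
        ∃ l : ℂ, IsEig (Lmat (α μ ε) (β μ ε) (γ μ ε)) l ∧ l.re ≠ 0) ↔
      ¬ (∀ ε ∈ Ioo (-ε₁) ε₁, β (μ₀ ε) ε = 0))
    -- (ii) ↔ (iii)
    ∧ (¬ (∀ ε ∈ Ioo (-ε₁) ε₁, β (μ₀ ε) ε = 0) ↔
        ∃ n : ℕ, iteratedDeriv n (fun ε => β (μ₀ ε) ε) 0 ≠ 0) := by
  obtain ⟨hε₁pos, hε₁le⟩ := hε₁
  have hδ₀pos := hH.hδ₀
  have hsub : Ioo (-ε₁) ε₁ ⊆ Ioo (-ε₀) ε₀ := Ioo_subset_Ioo (by linarith) hε₁le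
  have h0mem : (0:ℝ) ∈ Ioo (-ε₁) ε₁ := ⟨by linarith, hε₁pos⟩
  have hμbmem : μb ∈ Ioo (μb - δ₀) (μb + δ₀) := ⟨by linarith, by linarith⟩
  -- μ₀ 0 = μb
  obtain ⟨α₀, γ₀, d, hd, e, he, C, hC, hα₀an, hγ₀an, hbound⟩ := hH.hexp
  obtain ⟨e1, e2, e3, e4, e5⟩ := hbound 0 0 (by simpa using hd.1) (by simpa using he.1)
  have hT00 : α μb 0 + γ μb 0 = 0 := by
    have f1 : |α μb 0 + α₀ 0| ≤ 0 := by simpa using e1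
    have f3 : |γ μb 0 - γ₀ 0| ≤ 0 := by simpa using e3
    have f4 : |α₀ 0 - ωs| ≤ 0 := by simpa using e4
    have f5 : |γ₀ 0 - ωs| ≤ 0 := by simpa using e5
    rw [abs_nonpos_iff] at f1 f3 f4 f5
    linarith
  have hμ00 : μ₀ 0 = μb := ((hZ.hT μb hμbmem 0 h0mem).1.mp hT00).symm
  -- analyticity of ε ↦ β (μ₀ ε) ε
  have hf_an : AnalyticOnNhd ℝ (fun ε => β (μ₀ ε) ε) (Ioo (-ε₁) ε₁) := by
    intro x hx
    have hβ := hH.hβ_an (μ₀ x, x) (Set.mk_mem_prod (hZ.hmaps₀ x hx) (hsub hx))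
    have hc : AnalyticAt ℝ (fun ε : ℝ => (μ₀ ε, ε)) x := (hZ.hμ₀_an x hx).prod analyticAt_id
    have h3 : AnalyticAt ℝ ((fun p : ℝ × ℝ => β p.1 p.2) ∘ fun ε : ℝ => (μ₀ ε, ε)) x :=
      AnalyticAt.comp (f := fun ε : ℝ => (μ₀ ε, ε)) hβ hc
    exact h3
  -- key sign lemma under β ≡ 0 on the curve
  have key : (∀ ε ∈ Ioo (-ε₁) ε₁, β (μ₀ ε) ε = 0) →
      ∀ μ ∈ Ioo (μb-δ₀) (μb+δ₀), ∀ ε ∈ Ioo (-ε₁) ε₁,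
        0 ≤ (α μ ε + γ μ ε + 2*β μ ε) * (α μ ε + γ μ ε - 2*β μ ε) := by
    intro hb μ hμ ε hε
    have hμ₀mem := hZ.hmaps₀ ε hε
    have hT0 : α (μ₀ ε) ε + γ (μ₀ ε) ε = 0 := (hZ.hT _ hμ₀mem ε hε).1.mpr rfl
    have hβ0 := hb ε hε
    have hp0 : μ₀ ε = μp ε := (hZ.hdp _ hμ₀mem ε hε).1.mp (by rw [hβ0]; linarith)
    have hm0 : μ₀ ε = μm ε := (hZ.hdm _ hμ₀mem ε hε).1.mp (by rw [hβ0]; linarith)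
    rcases lt_trichotomy μ (μ₀ ε) with h | h | h
    · have h1 := (hZ.hdp μ hμ ε hε).2.2 (by rw [← hp0]; exact h)
      have h2 := (hZ.hdm μ hμ ε hε).2.2 (by rw [← hm0]; exact h)
      exact (mul_pos_of_neg_of_neg h1 h2).le
    · have h1 : α μ ε + γ μ ε + 2 * β μ ε = 0 := (hZ.hdp μ hμ ε hε).1.mpr (h.trans hp0)
      rw [h1, zero_mul]
    · have h1 := (hZ.hdp μ hμ ε hε).2.1 (by rw [← hp0]; exact h)
      have h2 := (hZ.hdm μ hμ ε hε).2.1 (by rw [← hm0]; exact h)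
      exact (mul_pos h1 h2).le
  constructor
  · constructor
    · -- (i) → (ii)
      intro hi hb
      obtain ⟨μ, ε, hμδ, hεpos, hεlt, l, hl, hre⟩ :=
        hi (δ₀/2) ⟨by positivity, by linarith⟩ (ε₁/2) ⟨by positivity, by linarith⟩
      have habs := abs_lt.mp hμδ
      have hμmem : μ ∈ Ioo (μb-δ₀) (μb+δ₀) := ⟨by linarith [habs.1], by linarith [habs.2]⟩
      have hεabs := abs_lt.mp hεlt
      have hεmem : ε ∈ Ioo (-ε₁) ε₁ := ⟨by linarith [hεabs.1], by linarith [hεabs.2]⟩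
      have hneg := (eig_re_iff _ _ _).mp ⟨l, hl, hre⟩
      have hpos := key hb μ hμmem ε hεmem
      linarith
    · -- (ii) → (i)
      intro hb δ' hδ' ε' hε'
      push_neg at hb
      obtain ⟨εs, hεs, hfs⟩ := hb
      have hcont : ContinuousAt μ₀ 0 := (hZ.hμ₀_an 0 h0mem).continuousAt
      rw [Metric.continuousAt_iff] at hcont
      obtain ⟨η, hη, hηball⟩ := hcont δ' hδ'.1
      have hrpos : 0 < min ε' η := lt_min hε'.1 hη
      have hex : ∃ ε, 0 < ε ∧ ε < min ε' η ∧ β (μ₀ ε) ε ≠ 0 := by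
        by_contra hcon
        push_neg at hcon
        have hzero : EqOn (fun ε => β (μ₀ ε) ε) 0 (Ioo (-ε₁) ε₁) := by
          apply hf_an.eqOn_zero_of_preconnected_of_eventuallyEq_zero isPreconnected_Ioo
            (z₀ := min ε' η / 2) ⟨by linarith, by linarith [min_le_left ε' η, hε'.2]⟩
          filter_upwards [Ioo_mem_nhds (by linarith : (0:ℝ) < min ε' η / 2)
            (by linarith : min ε' η / 2 < min ε' η)] with x hx
          exact hcon x hx.1 hx.2
        exact hfs (hzero hεs)
      obtain ⟨ε, hε0, hεr, hβne⟩ := hex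
      have hεltε' : ε < ε' := lt_of_lt_of_le hεr (min_le_left _ _)
      have hεmem : ε ∈ Ioo (-ε₁) ε₁ := ⟨by linarith, by linarith [hε'.2]⟩
      refine ⟨μ₀ ε, ε, ?_, ?_, ?_, ?_⟩
      · have := hηball (x := ε) (by
          rw [Real.dist_eq, sub_zero, abs_of_pos hε0]
          exact lt_of_lt_of_le hεr (min_le_right _ _))
        rwa [hμ00, Real.dist_eq] at this
      · exact abs_pos.mpr (ne_of_gt hε0)
      · rw [abs_of_pos hε0]; exact hεltε'
      · apply (eig_re_iff _ _ _).mpr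
        have hT0 : α (μ₀ ε) ε + γ (μ₀ ε) ε = 0 :=
          (hZ.hT _ (hZ.hmaps₀ ε hεmem) ε hεmem).1.mpr rfl
        have hβ2 : 0 < (β (μ₀ ε) ε)^2 := by positivity
        nlinarith
  · constructor
    · -- (ii) → (iii)
      intro hb
      by_contra hcon
      push_neg at hcon
      apply hb
      have hev : (fun ε => β (μ₀ ε) ε) =ᶠ[nhds 0] 0 :=
        eventually_zero_of_derivs_zero (hf_an 0 h0mem) hcon
      intro ε hε
      exact hf_an.eqOn_zero_of_preconnected_of_eventuallyEq_zero isPreconnected_Ioo h0mem hev hε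
    · -- (iii) → (ii)
      rintro ⟨n, hn⟩ hb
      apply hn
      have hev : (fun ε => β (μ₀ ε) ε) =ᶠ[nhds 0] 0 :=
        Filter.eventually_of_mem (Ioo_mem_nhds (neg_lt_zero.mpr hε₁pos) hε₁pos)
          (fun x hx => by simpa using hb x hx)
      rw [hev.iteratedDeriv_eq n]
      exact iteratedDeriv_zero_fun n
end

section
/- Under Assumption H and with μ₀, μ₊, μ₋, μ∧, μ∨ as in the context, for every (μ,ε) ∈ (μ̄−δ₀, μ̄+δ₀) × (−ε₁, ε₁) the following three conditions are equivalent: (i) the matrix L(μ,ε) has two eigenvalues with opposite nonzero real parts; (ii) D(μ,ε) = −d₊(μ,ε)·d₋(μ,ε) > 0; (iii) μ∧(ε) < μ < μ∨(ε). Moreover, if these conditions fail then every eigenvalue of L(μ,ε) is purely imaginary. -/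
open Matrix Set

lemma isEig_iff' (M : Matrix (Fin 2) (Fin 2) ℂ) (l : ℂ) :
    IsEig M l ↔ (l - M 0 0) * (l - M 1 1) - M 0 1 * M 1 0 = 0 := by
  rw [IsEig, Matrix.charpoly, Matrix.det_fin_two, Polynomial.IsRoot]
  simp [charmatrix_apply_eq, charmatrix_apply_ne]

lemma root_iff (a b c : ℝ) (l : ℂ) :
    IsEig (Lmat a b c) l ↔
      l^2 - Complex.I*((c:ℂ)-a)*l + ((a:ℂ)*c - (b:ℂ)^2) = 0 := by
  rw [isEig_iff', Lmat_eq]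
  norm_num [Matrix.cons_val_zero, Matrix.cons_val_one]
  constructor <;> intro h <;>
    [linear_combination h + (a:ℂ)*c*Complex.I_sq;
     linear_combination h - (a:ℂ)*c*Complex.I_sq]

lemma root_parts (a b c : ℝ) (l : ℂ)
    (h : l^2 - Complex.I*((c:ℂ)-a)*l + ((a:ℂ)*c - (b:ℂ)^2) = 0) :
    (l.re^2 - l.im^2 + (c-a)*l.im + (a*c - b^2) = 0) ∧
    (2*l.re*l.im - (c-a)*l.re = 0) := by
  rw [Complex.ext_iff] at h
  simp [pow_two, Complex.mul_re, Complex.mul_im] at h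
  constructor <;> nlinarith [h.1, h.2]

lemma re_zero_of_D_nonpos (a b c : ℝ) (hD : 4*b^2 - (a+c)^2 ≤ 0) (l : ℂ)
    (h : IsEig (Lmat a b c) l) : l.re = 0 := by
  obtain ⟨h1, h2⟩ := root_parts a b c l ((root_iff a b c l).mp h)
  have hfac : l.re * (2*l.im - (c-a)) = 0 := by ring_nf; linarith [h2]
  rcases mul_eq_zero.mp hfac with hx | hy
  · exact hx
  · have hy' : l.im = (c-a)/2 := by linarith
    have hx2 : l.re^2 ≤ 0 := by nlinarith [h1, hD]
    nlinarith [sq_nonneg l.re]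

lemma exists_eigs_of_D_pos (a b c : ℝ) (hD : 0 < 4*b^2 - (a+c)^2) :
    ∃ l₁ l₂ : ℂ, IsEig (Lmat a b c) l₁ ∧ IsEig (Lmat a b c) l₂ ∧
      0 < l₁.re ∧ l₂.re = -l₁.re := by
  set D : ℝ := 4*b^2 - (a+c)^2 with hDdef
  set s : ℝ := Real.sqrt D with hsdef
  have hs2 : s^2 = D := Real.sq_sqrt hD.le
  have hspos : 0 < s := Real.sqrt_pos.mpr hD
  have hsC : (s:ℂ)^2 = 4*(b:ℂ)^2 - ((a:ℂ)+c)^2 := by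
    have h' : s^2 = 4*b^2-(a+c)^2 := hs2
    exact_mod_cast h'
  refine ⟨⟨s/2, (c-a)/2⟩, ⟨-(s/2), (c-a)/2⟩, ?_, ?_, by simpa using hspos, by simp⟩
  · rw [root_iff]
    rw [show (⟨s/2, (c-a)/2⟩ : ℂ) = (s:ℂ)/2 + Complex.I * (((c:ℂ)-a)/2) by
      simp [Complex.ext_iff]]
    linear_combination (1/4 : ℂ) * hsC +
      (-(((a:ℂ)-c)^2)/4) * Complex.I_sq
  · rw [root_iff]
    rw [show (⟨-(s/2), (c-a)/2⟩ : ℂ) = -((s:ℂ)/2) + Complex.I * (((c:ℂ)-a)/2) by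
      simp [Complex.ext_iff]]
    linear_combination (1/4 : ℂ) * hsC +
      (-(((a:ℂ)-c)^2)/4) * Complex.I_sq

lemma gt_of_pos_sign {d : ℝ} {μ μp : ℝ} (hiff : d = 0 ↔ μ = μp)
    (hneg : μ < μp → d < 0) (hd : 0 < d) : μp < μ := by
  rcases lt_trichotomy μ μp with h | h | h
  · linarith [hneg h]
  · exact absurd (hiff.mpr h) (by linarith)
  · exact h

lemma lt_of_neg_sign {d : ℝ} {μ μp : ℝ} (hiff : d = 0 ↔ μ = μp)
    (hpos : μp < μ → 0 < d) (hd : d < 0) : μ < μp := by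
  rcases lt_trichotomy μ μp with h | h | h
  · exact h
  · exact absurd (hiff.mpr h) (by linarith)
  · linarith [hpos h]


theorem stmt4 (μb ωs δ₀ ε₀ : ℝ) (α β γ : ℝ → ℝ → ℝ) (α₁ α₂ β₁ β₂ β₃ γ₁ γ₂ : ℝ)
    (hH : AssumptionH μb ωs δ₀ ε₀ α β γ α₁ α₂ β₁ β₂ β₃ γ₁ γ₂)
    (ε₁ : ℝ) (hε₁ : ε₁ ∈ Ioc (0 : ℝ) ε₀) (μ₀ μp μm : ℝ → ℝ)
    (hZ : ZeroCurves μb δ₀ α β γ ε₁ μ₀ μp μm) :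
    ∀ μ ∈ Ioo (μb - δ₀) (μb + δ₀), ∀ ε ∈ Ioo (-ε₁) ε₁,
      -- (i) ↔ (ii)
      ((∃ l₁ l₂ : ℂ, IsEig (Lmat (α μ ε) (β μ ε) (γ μ ε)) l₁ ∧
          IsEig (Lmat (α μ ε) (β μ ε) (γ μ ε)) l₂ ∧ 0 < l₁.re ∧ l₂.re = -l₁.re) ↔
        (4 * β μ ε ^ 2 - (α μ ε + γ μ ε) ^ 2 =
            -((α μ ε + γ μ ε + 2 * β μ ε) * (α μ ε + γ μ ε - 2 * β μ ε)) ∧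
          0 < 4 * β μ ε ^ 2 - (α μ ε + γ μ ε) ^ 2))
      -- (ii) ↔ (iii)
      ∧ ((4 * β μ ε ^ 2 - (α μ ε + γ μ ε) ^ 2 =
            -((α μ ε + γ μ ε + 2 * β μ ε) * (α μ ε + γ μ ε - 2 * β μ ε)) ∧
          0 < 4 * β μ ε ^ 2 - (α μ ε + γ μ ε) ^ 2) ↔
        (min (μp ε) (μm ε) < μ ∧ μ < max (μp ε) (μm ε)))
      -- otherwise all eigenvalues are purely imaginary
      ∧ (¬ (4 * β μ ε ^ 2 - (α μ ε + γ μ ε) ^ 2 =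
            -((α μ ε + γ μ ε + 2 * β μ ε) * (α μ ε + γ μ ε - 2 * β μ ε)) ∧
          0 < 4 * β μ ε ^ 2 - (α μ ε + γ μ ε) ^ 2) →
        ∀ l : ℂ, IsEig (Lmat (α μ ε) (β μ ε) (γ μ ε)) l → l.re = 0) := by
  intro μ hμ ε hε
  have hid : 4 * β μ ε ^ 2 - (α μ ε + γ μ ε) ^ 2 =
      -((α μ ε + γ μ ε + 2 * β μ ε) * (α μ ε + γ μ ε - 2 * β μ ε)) := by ring
  obtain ⟨hp_iff, hp_pos, hp_neg⟩ := hZ.hdp μ hμ ε hε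
  obtain ⟨hm_iff, hm_pos, hm_neg⟩ := hZ.hdm μ hμ ε hε
  have hDform : 4 * β μ ε ^ 2 - (α μ ε + γ μ ε) ^ 2 =
      4 * (β μ ε) ^ 2 - (α μ ε + γ μ ε) ^ 2 := rfl
  refine ⟨?_, ?_, ?_⟩
  · constructor
    · rintro ⟨l₁, l₂, h1, h2, hre, -⟩
      refine ⟨hid, ?_⟩
      by_contra hD
      push_neg at hD
      have := re_zero_of_D_nonpos (α μ ε) (β μ ε) (γ μ ε) (by linarith) l₁ h1
      linarith
    · rintro ⟨-, hD⟩
      exact exists_eigs_of_D_pos (α μ ε) (β μ ε) (γ μ ε) hD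
  · constructor
    · rintro ⟨-, hD⟩
      have hprod : (α μ ε + γ μ ε + 2 * β μ ε) * (α μ ε + γ μ ε - 2 * β μ ε) < 0 := by
        nlinarith
      rcases mul_neg_iff.mp hprod with ⟨hdp, hdm⟩ | ⟨hdp, hdm⟩
      · have h1 : μp ε < μ := gt_of_pos_sign hp_iff hp_neg hdp
        have h2 : μ < μm ε := lt_of_neg_sign hm_iff hm_pos hdm
        exact ⟨lt_of_le_of_lt (min_le_left _ _) h1, lt_of_lt_of_le h2 (le_max_right _ _)⟩
      · have h1 : μm ε < μ := gt_of_pos_sign hm_iff hm_neg hdm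
        have h2 : μ < μp ε := lt_of_neg_sign hp_iff hp_pos hdp
        exact ⟨lt_of_le_of_lt (min_le_right _ _) h1, lt_of_lt_of_le h2 (le_max_left _ _)⟩
    · rintro ⟨h1, h2⟩
      refine ⟨hid, ?_⟩
      rcases le_total (μp ε) (μm ε) with hle | hle
      · have hpμ : μp ε < μ := by rw [min_eq_left hle] at h1; exact h1
        have hμm : μ < μm ε := by simpa [max_eq_right hle] using h2
        have hdp := hp_pos hpμ
        have hdm := hm_neg hμm
        nlinarith
      · have hpμ : μm ε < μ := by simpa [min_eq_right hle] using h1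
        have hμm : μ < μp ε := by simpa [max_eq_left hle] using h2
        have hdp := hp_neg hμm
        have hdm := hm_pos hpμ
        nlinarith
  · intro hnot l hl
    have hD : 4 * β μ ε ^ 2 - (α μ ε + γ μ ε) ^ 2 ≤ 0 := by
      by_contra h
      push_neg at h
      exact hnot ⟨hid, h⟩
    exact re_zero_of_D_nonpos (α μ ε) (β μ ε) (γ μ ε) (by linarith) l hl
end

section
/- Under Assumption H and with μ₀ as in the context, there exist ε₂ ∈ (0,ε₁] and C > 0 such that for all |ε| < ε₂: |β(μ₀(ε),ε) − β₁ε² − (β₃ − β₂·T₂/T₁)ε⁴| ≤ C|ε|⁵; that is, β(μ₀(ε),ε) = β₁ε² + (β₃ − β₂T₂/T₁)ε⁴ + O(ε⁵). -/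
open Matrix Set

/-!
Write `δ(ε) = μ₀(ε) - μ̄`. The expansion of `T` at `(μ̄, 0)` forces `μ₀(0) = μ̄`, so `δ → 0`.
On the curve `T = 0`, Assumption H gives
`T₁ δ + T₂ ε² = O(|ε|³ + |δ| ε² + δ² |ε| + δ²)`; since `δ → 0`, the terms containing `δ` are
absorbed by the left side, which gives first `δ = O(ε²)` and then
`δ = -(T₂/T₁) ε² + O(ε³)`. Substituting this into `β = β₁ ε² + β₂ δ ε² + β₃ ε⁴ + O(ε⁵)`
gives the claim.
-/

open Asymptotics Filter Topology

section PowerBounds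

variable {ι : Type*} {l : Filter ι} {x y : ι → ℝ}

theorem isBigO_pow_pow_of_tendsto_zero (hy : Tendsto y l (𝓝 0)) {k n : ℕ} (hkn : k ≤ n) :
    (fun t => y t ^ n) =O[l] fun t => y t ^ k := by
  obtain ⟨m, rfl⟩ := Nat.exists_eq_add_of_le hkn
  simpa [pow_add, mul_comm] using
    ((hy.pow m).isBigO_one ℝ).mul (isBigO_refl (fun t => y t ^ k) l)

theorem isBigO_abs_pow_mul_abs_pow (hy : Tendsto y l (𝓝 0)) (hx : x =O[l] fun t => y t ^ 2)
    {i j k : ℕ} (hk : k ≤ 2 * i + j) :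
    (fun t => |x t| ^ i * |y t| ^ j) =O[l] fun t => y t ^ k := by
  have hxi : (fun t => |x t| ^ i) =O[l] fun t => y t ^ (2 * i) := by
    simpa [pow_mul] using hx.abs_left.pow i
  have hyj : (fun t => |y t| ^ j) =O[l] fun t => y t ^ j :=
    (isBigO_refl y l).abs_left.pow j
  exact (hxi.mul hyj).trans (by simpa [pow_add] using isBigO_pow_pow_of_tendsto_zero hy hk)

theorem isBigO_sq_of_isBigO_mul_add_mul_sq {a b : ℝ} (ha : a ≠ 0)
    (hx : Tendsto x l (𝓝 0)) (hy : Tendsto y l (𝓝 0))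
    (h : (fun t => a * x t + b * y t ^ 2) =O[l]
      fun t => |y t| ^ 3 + |x t| * y t ^ 2 + x t ^ 2 * |y t| + x t ^ 2) :
    x =O[l] fun t => y t ^ 2 := by
  obtain ⟨c, hc, hcb⟩ := h.exists_pos
  have hsmall : Tendsto (fun t => c * (y t ^ 2 + |x t| * |y t| + |x t|)) l (𝓝 0) := by
    simpa using (((hy.pow 2).add (hx.abs.mul hy.abs)).add hx.abs).const_mul c
  -- once `c (y² + |x| |y| + |x|) ≤ |a| / 2`, the `x`-terms of the majorant are absorbed
  -- by `|a| |x|`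
  refine IsBigO.of_bound (2 * (c + |b|) / |a|) ?_
  filter_upwards [hcb.bound, hsmall.eventually (ge_mem_nhds (half_pos (abs_pos.2 ha))),
    hy.abs.eventually (ge_mem_nhds (by norm_num : |(0 : ℝ)| < 1))] with t hbound hxsmall hy1
  have hnorm : ‖|y t| ^ 3 + |x t| * y t ^ 2 + x t ^ 2 * |y t| + x t ^ 2‖
      = |y t| ^ 3 + |x t| * |y t| ^ 2 + |x t| ^ 2 * |y t| + |x t| ^ 2 := by
    rw [Real.norm_eq_abs, abs_of_nonneg (by positivity), ← sq_abs (y t), ← sq_abs (x t)]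
  have hlin : |a| * |x t| ≤ ‖a * x t + b * y t ^ 2‖ + |b| * |y t| ^ 2 := by
    have := abs_sub (a * x t + b * y t ^ 2) (b * y t ^ 2)
    rwa [add_sub_cancel_right, abs_mul, abs_mul, abs_pow] at this
  have hcube : c * |y t| ^ 3 ≤ c * |y t| ^ 2 :=
    mul_le_mul_of_nonneg_left (pow_le_pow_of_le_one (abs_nonneg _) hy1 (by norm_num)) hc.le
  have habsorb : |x t| * (c * (|y t| ^ 2 + |x t| * |y t| + |x t|)) ≤ |x t| * (|a| / 2) :=
    mul_le_mul_of_nonneg_left (by rwa [sq_abs]) (abs_nonneg _)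
  rw [hnorm] at hbound
  rw [Real.norm_eq_abs, Real.norm_eq_abs, abs_pow, div_mul_eq_mul_div,
    le_div_iff₀ (abs_pos.2 ha)]
  linarith

theorem isBigO_add_div_mul_sq_of_isBigO_mul_add_mul_sq {a b : ℝ} (ha : a ≠ 0)
    (hx : Tendsto x l (𝓝 0)) (hy : Tendsto y l (𝓝 0))
    (h : (fun t => a * x t + b * y t ^ 2) =O[l]
      fun t => |y t| ^ 3 + |x t| * y t ^ 2 + x t ^ 2 * |y t| + x t ^ 2) :
    (fun t => x t + b / a * y t ^ 2) =O[l] fun t => y t ^ 3 := by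
  have hx2 := isBigO_sq_of_isBigO_mul_add_mul_sq ha hx hy h
  have m {i j : ℕ} (hij : 3 ≤ 2 * i + j) := isBigO_abs_pow_mul_abs_pow hy hx2 hij
  have hR : (fun t => |y t| ^ 3 + |x t| * y t ^ 2 + x t ^ 2 * |y t| + x t ^ 2) =O[l]
      fun t => y t ^ 3 := by
    refine ((((m (i := 0) (j := 3) le_rfl).add (m (i := 1) (j := 2) (by norm_num))).add
      (m (i := 2) (j := 1) (by norm_num))).add (m (i := 2) (j := 0) (by norm_num))).congr_left
      fun t => ?_
    simp [sq_abs]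
  refine ((h.trans hR).const_mul_left a⁻¹).congr_left fun t => ?_
  field_simp

theorem isBigO_sub_quartic_of_expansion {f : ι → ℝ} {c β₁ β₂ β₃ : ℝ}
    (hy : Tendsto y l (𝓝 0)) (hx2 : x =O[l] fun t => y t ^ 2)
    (hx3 : (fun t => x t + c * y t ^ 2) =O[l] fun t => y t ^ 3)
    (hf : (fun t => f t - (β₁ * y t ^ 2 + β₂ * x t * y t ^ 2 + β₃ * y t ^ 4)) =O[l]
      fun t => |y t| ^ 5 + |x t| * |y t| ^ 3 + x t ^ 2 * y t ^ 2 + |x t| ^ 3 * |y t|) :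
    (fun t => f t - (β₁ * y t ^ 2 + (β₃ - β₂ * c) * y t ^ 4)) =O[l] fun t => y t ^ 5 := by
  have m {i j : ℕ} (hij : 5 ≤ 2 * i + j) := isBigO_abs_pow_mul_abs_pow hy hx2 hij
  have hR : (fun t => |y t| ^ 5 + |x t| * |y t| ^ 3 + x t ^ 2 * y t ^ 2 + |x t| ^ 3 * |y t|)
      =O[l] fun t => y t ^ 5 := by
    refine ((((m (i := 0) (j := 5) le_rfl).add (m (i := 1) (j := 3) le_rfl)).add
      (m (i := 2) (j := 2) (by norm_num))).add (m (i := 3) (j := 1) (by norm_num))).congr_left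
      fun t => ?_
    simp [sq_abs]
  have hcorr : (fun t => β₂ * y t ^ 2 * (x t + c * y t ^ 2)) =O[l] fun t => y t ^ 5 := by
    refine (((isBigO_refl (fun t => y t ^ 2) l).const_mul_left β₂).mul hx3).congr_right
      fun t => ?_
    ring
  refine ((hf.trans hR).add hcorr).congr_left fun t => ?_
  ring

theorem exists_abs_le_mul_pow_of_isBigO {f : ℝ → ℝ} {n : ℕ} (h : f =O[𝓝 0] fun x => x ^ n)
    {r : ℝ} (hr : 0 < r) : ∃ ρ ∈ Ioc 0 r, ∃ C > 0, ∀ x, |x| < ρ → |f x| ≤ C * |x| ^ n := by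
  obtain ⟨C, hC, hCb⟩ := h.exists_pos
  obtain ⟨ρ, hρ, hball⟩ := Metric.eventually_nhds_iff.1 hCb.bound
  refine ⟨min ρ r, ⟨lt_min hρ hr, min_le_right _ _⟩, C, hC, fun x hx => ?_⟩
  simpa [abs_pow] using hball (by simpa [Real.dist_eq] using hx.trans_le (min_le_left _ _))

end PowerBounds

theorem eventually_abs_fst_lt_and_abs_snd_lt {d e : ℝ} (hd : 0 < d) (he : 0 < e) :
    ∀ᶠ p : ℝ × ℝ in 𝓝 0, |p.1| < d ∧ |p.2| < e :=
  ((continuous_fst.abs.tendsto' 0 0 (by simp)).eventually (gt_mem_nhds hd)).and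
    ((continuous_snd.abs.tendsto' 0 0 (by simp)).eventually (gt_mem_nhds he))

section Curve

variable {μb ωs δ₀ ε₀ : ℝ} {α β γ : ℝ → ℝ → ℝ} {α₁ α₂ β₁ β₂ β₃ γ₁ γ₂ : ℝ}

theorem AssumptionH.isBigO_trace (hH : AssumptionH μb ωs δ₀ ε₀ α β γ α₁ α₂ β₁ β₂ β₃ γ₁ γ₂) :
    (fun p : ℝ × ℝ => α (μb + p.1) p.2 + γ (μb + p.1) p.2
        - ((α₁ + γ₁) * p.1 + (α₂ + γ₂) * p.2 ^ 2))
      =O[𝓝 0] fun p => |p.2| ^ 3 + |p.1| * p.2 ^ 2 + p.1 ^ 2 * |p.2| + p.1 ^ 2 := by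
  obtain ⟨α₀, γ₀, d, hd, e, he, C, -, -, -, hexp⟩ := hH.hexp
  refine IsBigO.of_bound (2 * C) ?_
  filter_upwards [eventually_abs_fst_lt_and_abs_snd_lt hd.1 he.1] with ⟨δ, ε⟩ ⟨hδ, hε⟩
  dsimp only at hδ hε ⊢
  obtain ⟨hα, -, hγ, hα₀, hγ₀⟩ := hexp δ ε hδ hε
  rw [Real.norm_eq_abs, Real.norm_of_nonneg (by positivity)]
  -- `T - (T₁ δ + T₂ ε²)` is the sum of the remainders of `α`, `γ`, `-α₀` and `γ₀`
  rw [abs_le] at hα hγ hα₀ hγ₀ ⊢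
  constructor <;> linarith

theorem AssumptionH.isBigO_beta (hH : AssumptionH μb ωs δ₀ ε₀ α β γ α₁ α₂ β₁ β₂ β₃ γ₁ γ₂) :
    (fun p : ℝ × ℝ => β (μb + p.1) p.2 - (β₁ * p.2 ^ 2 + β₂ * p.1 * p.2 ^ 2 + β₃ * p.2 ^ 4))
      =O[𝓝 0] fun p => |p.2| ^ 5 + |p.1| * |p.2| ^ 3 + p.1 ^ 2 * p.2 ^ 2 + |p.1| ^ 3 * |p.2| := by
  obtain ⟨α₀, γ₀, d, hd, e, he, C, -, -, -, hexp⟩ := hH.hexp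
  refine IsBigO.of_bound C ?_
  filter_upwards [eventually_abs_fst_lt_and_abs_snd_lt hd.1 he.1] with ⟨δ, ε⟩ ⟨hδ, hε⟩
  dsimp only at hδ hε ⊢
  rw [Real.norm_eq_abs, Real.norm_of_nonneg (by positivity)]
  exact (hexp δ ε hδ hε).2.1

variable {ε₁ : ℝ} {μ₀ μp μm : ℝ → ℝ}

theorem ZeroCurves.trace_curve_at_zero (hZ : ZeroCurves μb δ₀ α β γ ε₁ μ₀ μp μm)
    (hH : AssumptionH μb ωs δ₀ ε₀ α β γ α₁ α₂ β₁ β₂ β₃ γ₁ γ₂) (hε₁ : 0 < ε₁) : μ₀ 0 = μb := by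
  have hT : α μb 0 + γ μb 0 = 0 := by
    simpa using hH.isBigO_trace.eq_zero_imp.self_of_nhds (by simp)
  exact ((hZ.hT μb ⟨by linarith [hH.hδ₀], by linarith [hH.hδ₀]⟩ 0 ⟨by linarith, hε₁⟩).1.1 hT).symm

theorem ZeroCurves.tendsto_trace_curve_sub (hZ : ZeroCurves μb δ₀ α β γ ε₁ μ₀ μp μm)
    (hH : AssumptionH μb ωs δ₀ ε₀ α β γ α₁ α₂ β₁ β₂ β₃ γ₁ γ₂) (hε₁ : 0 < ε₁) :
    Tendsto (fun ε => μ₀ ε - μb) (𝓝 0) (𝓝 0) := by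
  have hcont := (hZ.hμ₀_an 0 ⟨by linarith, hε₁⟩).continuousAt.tendsto.sub_const μb
  rwa [hZ.trace_curve_at_zero hH hε₁, sub_self] at hcont

theorem ZeroCurves.isBigO_trace_curve (hZ : ZeroCurves μb δ₀ α β γ ε₁ μ₀ μp μm)
    (hH : AssumptionH μb ωs δ₀ ε₀ α β γ α₁ α₂ β₁ β₂ β₃ γ₁ γ₂) (hε₁ : 0 < ε₁) :
    (fun ε => (α₁ + γ₁) * (μ₀ ε - μb) + (α₂ + γ₂) * ε ^ 2) =O[𝓝 0] fun ε =>
      |ε| ^ 3 + |μ₀ ε - μb| * ε ^ 2 + (μ₀ ε - μb) ^ 2 * |ε| + (μ₀ ε - μb) ^ 2 := by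
  have hpair := (hZ.tendsto_trace_curve_sub hH hε₁).prodMk_nhds tendsto_id
  refine (hH.isBigO_trace.comp_tendsto hpair).neg_left.congr' ?_ EventuallyEq.rfl
  filter_upwards [Ioo_mem_nhds (neg_neg_iff_pos.2 hε₁) hε₁] with ε hε
  have hT := (hZ.hT (μ₀ ε) (hZ.hmaps₀ ε hε) ε hε).1.2 rfl
  simp only [Function.comp_apply, add_sub_cancel, id]
  linarith

theorem ZeroCurves.isBigO_beta_curve (hZ : ZeroCurves μb δ₀ α β γ ε₁ μ₀ μp μm)
    (hH : AssumptionH μb ωs δ₀ ε₀ α β γ α₁ α₂ β₁ β₂ β₃ γ₁ γ₂) (hε₁ : 0 < ε₁) :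
    (fun ε => β (μ₀ ε) ε - (β₁ * ε ^ 2 + β₂ * (μ₀ ε - μb) * ε ^ 2 + β₃ * ε ^ 4)) =O[𝓝 0]
      fun ε =>
        |ε| ^ 5 + |μ₀ ε - μb| * |ε| ^ 3 + (μ₀ ε - μb) ^ 2 * ε ^ 2 + |μ₀ ε - μb| ^ 3 * |ε| := by
  have hpair := (hZ.tendsto_trace_curve_sub hH hε₁).prodMk_nhds tendsto_id
  simpa only [Function.comp_def, add_sub_cancel, id] using hH.isBigO_beta.comp_tendsto hpair

end Curve

theorem stmt6 (μb ωs δ₀ ε₀ : ℝ) (α β γ : ℝ → ℝ → ℝ) (α₁ α₂ β₁ β₂ β₃ γ₁ γ₂ : ℝ)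
    (hH : AssumptionH μb ωs δ₀ ε₀ α β γ α₁ α₂ β₁ β₂ β₃ γ₁ γ₂)
    (ε₁ : ℝ) (hε₁ : ε₁ ∈ Ioc (0 : ℝ) ε₀) (μ₀ μp μm : ℝ → ℝ)
    (hZ : ZeroCurves μb δ₀ α β γ ε₁ μ₀ μp μm) :
    ∃ ε₂ ∈ Ioc (0 : ℝ) ε₁, ∃ C > (0 : ℝ), ∀ ε : ℝ, |ε| < ε₂ →
      |β (μ₀ ε) ε - (β₁ * ε ^ 2 + (β₃ - β₂ * (α₂ + γ₂) / (α₁ + γ₁)) * ε ^ 4)| ≤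
        C * |ε| ^ 5 := by
  have hδ := hZ.tendsto_trace_curve_sub hH hε₁.1
  have htrace := hZ.isBigO_trace_curve hH hε₁.1
  have hδ2 := isBigO_sq_of_isBigO_mul_add_mul_sq (y := fun ε => ε) hH.hT₁.ne' hδ tendsto_id htrace
  have hδ3 := isBigO_add_div_mul_sq_of_isBigO_mul_add_mul_sq (y := fun ε => ε) hH.hT₁.ne' hδ
    tendsto_id htrace
  have hβ := isBigO_sub_quartic_of_expansion (y := fun ε => ε) tendsto_id hδ2 hδ3
    (hZ.isBigO_beta_curve hH hε₁.1)
  exact exists_abs_le_mul_pow_of_isBigO (hβ.congr_left fun ε => by rw [mul_div_assoc]) hε₁.1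
end

section
/- Under Assumption H with β₁ = 0, and with μ₀, μ₊, μ₋, ν± as in the context, there exist ε₂ ∈ (0,ε₁] and C > 0 such that for all |ε| < ε₂: |ν₊(ε) + (2/T₁)(β₃ − β₂T₂/T₁)ε⁴| ≤ C|ε|⁵ and |ν₋(ε) − (2/T₁)(β₃ − β₂T₂/T₁)ε⁴| ≤ C|ε|⁵; that is, ν±(ε) = ∓(2/T₁)(β₃ − β₂T₂/T₁)ε⁴ + O(ε⁵). -/
open Matrix Set

/-!
Write `F(δ, ε) = T(μ̄ + δ, ε)`, `B(δ, ε) = β(μ̄ + δ, ε)` and `x₀, x±` for `μ₀ - μ̄, μ± - μ̄`.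
The curves are analytic and vanish at `0`, so `x = O(ε)`, and on them `F(x₀, ε) = 0` and
`F(x±, ε) ± 2 B(x±, ε) = 0`. Feeding `x = O(ε)` into the expansions of Assumption H gives
`x = O(ε²)`, then `x = -(T₂/T₁) ε² + O(ε³)` on each curve, hence
`B(x±, ε) = (β₃ - β₂ T₂/T₁) ε⁴ + O(ε⁵)`.
Since `F` is analytic, `F y - F z - DF(0) (y - z) = O(‖(y, z)‖ ‖y - z‖)` with `DF(0) (1, 0) = T₁`.
Comparing `F` at `(x±, ε)` and `(x₀, ε)` gives `T₁ (x± - x₀) ± 2 B(x±, ε) = O(ε |x± - x₀|)`: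
first `x± - x₀ = O(ε⁴)`, and then the claimed expansion up to `O(ε⁵)`.
-/

open Filter Topology Asymptotics

theorem isBigO_pow_of_le {m n : ℕ} (h : m ≤ n) :
    (fun ε : ℝ => ε ^ n) =O[𝓝 0] fun ε => ε ^ m :=
  h.eq_or_lt.elim (fun h => h ▸ isBigO_refl _ _) fun h => (isLittleO_pow_pow h).isBigO

theorem isBigO_abs_pow_one : (fun ε : ℝ => |ε|) =O[𝓝 0] (· ^ 1) := by
  simpa using (isBigO_refl (fun ε : ℝ => ε) (𝓝 0)).abs_left

namespace Asymptotics.IsBigO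

variable {u v : ℝ → ℝ} {a b n : ℕ}

theorem trans_pow_of_le (hu : u =O[𝓝 0] (· ^ a)) (h : n ≤ a) : u =O[𝓝 0] (· ^ n) :=
  hu.trans (isBigO_pow_of_le h)

theorem mul_pow_of_le (hu : u =O[𝓝 0] (· ^ a)) (hv : v =O[𝓝 0] (· ^ b)) (h : n ≤ a + b) :
    (fun ε => u ε * v ε) =O[𝓝 0] (· ^ n) :=
  ((hu.mul hv).congr_right fun ε => (pow_add ε a b).symm).trans_pow_of_le h

theorem pow_of_le (hu : u =O[𝓝 0] (· ^ a)) (k : ℕ) (h : n ≤ a * k) :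
    (fun ε => u ε ^ k) =O[𝓝 0] (· ^ n) :=
  ((hu.pow k).congr_right fun ε => (pow_mul ε a k).symm).trans_pow_of_le h

theorem tendsto_zero_of_pow (hu : u =O[𝓝 0] (· ^ a)) (ha : a ≠ 0) :
    Tendsto u (𝓝 0) (𝓝 0) :=
  hu.trans_tendsto (by simpa [zero_pow ha] using (continuous_pow a).tendsto (0 : ℝ))

end Asymptotics.IsBigO

theorem exists_abs_le_of_isBigO {f g : ℝ → ℝ} {n : ℕ} {r : ℝ} (hr : 0 < r)
    (hf : f =O[𝓝 0] (· ^ n)) (hg : g =O[𝓝 0] (· ^ n)) :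
    ∃ ε₂ ∈ Ioc 0 r, ∃ C > 0, ∀ ε, |ε| < ε₂ → |f ε| ≤ C * |ε| ^ n ∧ |g ε| ≤ C * |ε| ^ n := by
  obtain ⟨C, hC, hfg⟩ := (isBigO_prod_left.2 ⟨hf, hg⟩).exists_pos
  obtain ⟨η, hη, hball⟩ := Metric.eventually_nhds_iff.1 hfg.bound
  refine ⟨min η r, ⟨lt_min hη hr, min_le_right _ _⟩, C, hC, fun ε hε => ?_⟩
  have h := hball (show dist ε 0 < η by simpa using hε.trans_le (min_le_left _ _))
  simp only [norm_pow, Real.norm_eq_abs] at h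
  exact ⟨(norm_fst_le _).trans h, (norm_snd_le _).trans h⟩

theorem HasFPowerSeriesAt.isBigO_sub_sub_fderiv {E G : Type*} [NormedAddCommGroup E]
    [NormedSpace ℝ E] [NormedAddCommGroup G] [NormedSpace ℝ G] {f : E → G}
    {p : FormalMultilinearSeries ℝ E G} {x : E} (hf : HasFPowerSeriesAt f p x) :
    (fun y : E × E => f y.1 - f y.2 - fderiv ℝ f x (y.1 - y.2)) =O[𝓝 (x, x)]
      fun y => ‖y - (x, x)‖ * ‖y.1 - y.2‖ := by
  refine hf.isBigO_image_sub_norm_mul_norm_sub.congr_left fun y => ?_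
  rw [hf.fderiv_eq, continuousMultilinearCurryFin1_apply]
  congr 2

theorem fderiv_apply_one_zero_eq {f : ℝ × ℝ → ℝ} {T : ℝ} (hf : DifferentiableAt ℝ f 0)
    (h : (fun t => f (t, 0) - T * t) =O[𝓝 0] (· ^ 2)) : fderiv ℝ f 0 (1, 0) = T := by
  have h0 : f (0, 0) = 0 := by simpa using h.eq_zero_imp.self_of_nhds
  have hslice : HasDerivAt (fun t => f (t, 0)) T 0 := by
    rw [hasDerivAt_iff_isLittleO]
    simpa [h0, mul_comm] using h.trans_isLittleO (isLittleO_pow_id one_lt_two)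
  have hcomp : HasDerivAt (fun t => f (t, 0)) (fderiv ℝ f 0 (1, 0)) 0 :=
    hf.hasFDerivAt.comp_hasDerivAt (f := fun t : ℝ => (t, (0 : ℝ))) 0
      ((hasDerivAt_id (0 : ℝ)).prodMk (hasDerivAt_const (0 : ℝ) (0 : ℝ)))
  exact hcomp.unique hslice

/-- The weight of the remainder `r(ε³, δε², δ²ε)` in the expansion of `T = α + γ`, together with
the `r(δ²)` of `α₀` and `γ₀`. -/
def traceWeight (q : ℝ × ℝ) : ℝ := q.1 ^ 2 + |q.2| ^ 3 + |q.1| * q.2 ^ 2 + q.1 ^ 2 * |q.2|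

/-- The weight of the remainder `r(ε⁵, δε³, δ²ε², δ³ε)` in the expansion of `β`. -/
def betaWeight (q : ℝ × ℝ) : ℝ :=
  |q.2| ^ 5 + |q.1| * |q.2| ^ 3 + q.1 ^ 2 * q.2 ^ 2 + |q.1| ^ 3 * |q.2|

section ZeroCurve

variable {F B : ℝ × ℝ → ℝ} {T₁ T₂ b₂ b₃ s : ℝ} {x : ℝ → ℝ} {k n : ℕ}

theorem traceWeight_comp_isBigO (hx : x =O[𝓝 0] (· ^ k)) (hn₃ : n ≤ 3) (hnk : n ≤ 2 * k) :
    (fun ε => traceWeight (x ε, ε)) =O[𝓝 0] (· ^ n) := by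
  have hε := isBigO_abs_pow_one
  have hε2 : (fun ε : ℝ => ε ^ 2) =O[𝓝 0] (· ^ 2) := isBigO_refl _ _
  exact (((hx.pow_of_le 2 (by omega)).add (hε.pow_of_le 3 (by omega))).add
    (hx.abs_left.mul_pow_of_le hε2 (by omega))).add
    ((hx.pow_of_le 2 le_rfl).mul_pow_of_le hε (by omega))

theorem betaWeight_comp_isBigO (hx : x =O[𝓝 0] (· ^ k)) (hn₅ : n ≤ 5) (hnk : n ≤ k + 3)
    (hk : 1 ≤ k) : (fun ε => betaWeight (x ε, ε)) =O[𝓝 0] (· ^ n) := by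
  have hε := isBigO_abs_pow_one
  have hε2 : (fun ε : ℝ => ε ^ 2) =O[𝓝 0] (· ^ 2) := isBigO_refl _ _
  exact (((hε.pow_of_le 5 (by omega)).add
    (hx.abs_left.mul_pow_of_le (hε.pow_of_le 3 le_rfl) (by omega))).add
    ((hx.pow_of_le 2 le_rfl).mul_pow_of_le hε2 (by omega))).add
    ((hx.abs_left.pow_of_le 3 le_rfl).mul_pow_of_le hε (by omega))

theorem comp_graph_sub_isBigO {G P W : ℝ × ℝ → ℝ}
    (hG : (fun q => G q - P q) =O[𝓝 0] W) (hx : x =O[𝓝 0] (· ^ k)) (hk : k ≠ 0) :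
    (fun ε => G (x ε, ε) - P (x ε, ε)) =O[𝓝 0] fun ε => W (x ε, ε) :=
  hG.comp_tendsto ((hx.tendsto_zero_of_pow hk).prodMk_nhds tendsto_id)

theorem beta_comp_isBigO
    (hB : (fun q : ℝ × ℝ => B q - (b₂ * q.1 * q.2 ^ 2 + b₃ * q.2 ^ 4)) =O[𝓝 0] betaWeight)
    (hx : x =O[𝓝 0] (· ^ k)) (hk : 1 ≤ k) (hn₄ : n ≤ 4) (hnk : n ≤ k + 2) :
    (fun ε => B (x ε, ε)) =O[𝓝 0] (· ^ n) := by
  have hmain : (fun ε => b₂ * x ε * ε ^ 2 + b₃ * ε ^ 4) =O[𝓝 0] (· ^ n) := by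
    have h₂ : (fun ε => b₂ * x ε * ε ^ 2) =O[𝓝 0] (· ^ n) := by
      simpa only [mul_assoc] using
        (hx.mul_pow_of_le (isBigO_refl (· ^ 2) _) hnk).const_mul_left b₂
    exact h₂.add ((isBigO_pow_of_le hn₄).const_mul_left b₃)
  simpa using (comp_graph_sub_isBigO hB hx (by omega)).trans
    (betaWeight_comp_isBigO hx (by omega) (by omega) hk) |>.add hmain

theorem zero_curve_step
    (hF : (fun q : ℝ × ℝ => F q - (T₁ * q.1 + T₂ * q.2 ^ 2)) =O[𝓝 0] traceWeight)
    (hB : (fun q : ℝ × ℝ => B q - (b₂ * q.1 * q.2 ^ 2 + b₃ * q.2 ^ 4)) =O[𝓝 0] betaWeight)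
    (hx : x =O[𝓝 0] (· ^ k)) (hk : 1 ≤ k) (hk₂ : k ≤ 2)
    (hzero : ∀ᶠ ε in 𝓝 0, F (x ε, ε) + s * B (x ε, ε) = 0) :
    (fun ε => T₁ * x ε + T₂ * ε ^ 2) =O[𝓝 0] (· ^ (k + 1)) := by
  have hRF := (comp_graph_sub_isBigO hF hx (by omega)).trans
    (traceWeight_comp_isBigO (n := k + 1) hx (by omega) (by omega))
  have hBx := (beta_comp_isBigO (n := k + 1) hB hx hk (by omega) (by omega)).const_mul_left s
  refine (hRF.add hBx).neg_left.congr' ?_ EventuallyEq.rfl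
  filter_upwards [hzero] with ε h
  linear_combination -h

theorem zero_curve_isBigO_sq (hT₁ : T₁ ≠ 0)
    (hF : (fun q : ℝ × ℝ => F q - (T₁ * q.1 + T₂ * q.2 ^ 2)) =O[𝓝 0] traceWeight)
    (hB : (fun q : ℝ × ℝ => B q - (b₂ * q.1 * q.2 ^ 2 + b₃ * q.2 ^ 4)) =O[𝓝 0] betaWeight)
    (hx : x =O[𝓝 0] (· ^ 1)) (hzero : ∀ᶠ ε in 𝓝 0, F (x ε, ε) + s * B (x ε, ε) = 0) :
    x =O[𝓝 0] (· ^ 2) := by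
  have h := zero_curve_step hF hB hx le_rfl one_le_two hzero
  refine (isBigO_const_mul_left_iff hT₁).1 ?_
  exact (h.sub ((isBigO_refl (· ^ 2) _).const_mul_left T₂)).congr_left fun ε => by ring

theorem zero_curve_expansion (hT₁ : T₁ ≠ 0)
    (hF : (fun q : ℝ × ℝ => F q - (T₁ * q.1 + T₂ * q.2 ^ 2)) =O[𝓝 0] traceWeight)
    (hB : (fun q : ℝ × ℝ => B q - (b₂ * q.1 * q.2 ^ 2 + b₃ * q.2 ^ 4)) =O[𝓝 0] betaWeight)
    (hx : x =O[𝓝 0] (· ^ 1)) (hzero : ∀ᶠ ε in 𝓝 0, F (x ε, ε) + s * B (x ε, ε) = 0) :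
    (fun ε => x ε + T₂ / T₁ * ε ^ 2) =O[𝓝 0] (· ^ 3) := by
  have h := zero_curve_step hF hB (zero_curve_isBigO_sq hT₁ hF hB hx hzero) one_le_two le_rfl
    hzero
  exact (h.const_mul_left T₁⁻¹).congr_left fun ε => by field_simp

theorem beta_comp_sub_isBigO
    (hB : (fun q : ℝ × ℝ => B q - (b₂ * q.1 * q.2 ^ 2 + b₃ * q.2 ^ 4)) =O[𝓝 0] betaWeight)
    (hx : x =O[𝓝 0] (· ^ 2)) (hexp : (fun ε => x ε + T₂ / T₁ * ε ^ 2) =O[𝓝 0] (· ^ 3)) :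
    (fun ε => B (x ε, ε) - (b₃ - b₂ * T₂ / T₁) * ε ^ 4) =O[𝓝 0] (· ^ 5) := by
  have hRB := (comp_graph_sub_isBigO hB hx two_ne_zero).trans
    (betaWeight_comp_isBigO hx le_rfl le_rfl one_le_two)
  have hlin := ((isBigO_refl (· ^ 2) _).mul_pow_of_le hexp le_rfl).const_mul_left b₂
  exact (hRB.add hlin).congr_left fun ε => by ring

theorem zero_curve_sub_isBigO {D : ℝ × ℝ →L[ℝ] ℝ} {x₀ : ℝ → ℝ} (hT₁ : T₁ ≠ 0)
    (hF : (fun q : ℝ × ℝ => F q - (T₁ * q.1 + T₂ * q.2 ^ 2)) =O[𝓝 0] traceWeight)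
    (hB : (fun q : ℝ × ℝ => B q - (b₂ * q.1 * q.2 ^ 2 + b₃ * q.2 ^ 4)) =O[𝓝 0] betaWeight)
    (hFD : (fun y : (ℝ × ℝ) × (ℝ × ℝ) => F y.1 - F y.2 - D (y.1 - y.2)) =O[𝓝 0]
      fun y => ‖y‖ * ‖y.1 - y.2‖)
    (hD : D (1, 0) = T₁) (hx₀ : x₀ =O[𝓝 0] (· ^ 1)) (hx : x =O[𝓝 0] (· ^ 1))
    (hzero₀ : ∀ᶠ ε in 𝓝 0, F (x₀ ε, ε) = 0)
    (hzero : ∀ᶠ ε in 𝓝 0, F (x ε, ε) + s * B (x ε, ε) = 0) :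
    (fun ε => x ε - x₀ ε + s / T₁ * (b₃ - b₂ * T₂ / T₁) * ε ^ 4) =O[𝓝 0] (· ^ 5) := by
  set c := b₃ - b₂ * T₂ / T₁
  have hBx : (fun ε => B (x ε, ε) - c * ε ^ 4) =O[𝓝 0] (· ^ 5) :=
    beta_comp_sub_isBigO hB (zero_curve_isBigO_sq hT₁ hF hB hx hzero)
      (zero_curve_expansion hT₁ hF hB hx hzero)
  have hB4 : (fun ε => B (x ε, ε)) =O[𝓝 0] (· ^ 4) :=
    ((hBx.trans_pow_of_le (by norm_num)).add
      ((isBigO_refl (· ^ 4) _).const_mul_left c)).congr_left fun ε => by ring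
  set r := fun ε => T₁ * (x ε - x₀ ε) + s * B (x ε, ε)
  -- on the two zero curves, `r` is minus the defect `F(x, ε) - F(x₀, ε) - D (x - x₀, 0)`
  have hr : r =O[𝓝 0] fun ε => ε ^ 1 * (x ε - x₀ ε) := by
    have hpair : Tendsto (fun ε => ((x ε, ε), (x₀ ε, ε))) (𝓝 0) (𝓝 0) :=
      ((hx.tendsto_zero_of_pow one_ne_zero).prodMk_nhds tendsto_id).prodMk_nhds
        ((hx₀.tendsto_zero_of_pow one_ne_zero).prodMk_nhds tendsto_id)
    have hnorm : (fun ε => ‖((x ε, ε), (x₀ ε, ε))‖) =O[𝓝 0] (· ^ 1) := by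
      refine IsBigO.norm_left (isBigO_prod_left.2 ⟨isBigO_prod_left.2 ⟨hx, ?_⟩,
        isBigO_prod_left.2 ⟨hx₀, ?_⟩⟩) <;> simpa using isBigO_refl (fun ε : ℝ => ε) _
    have hdefect := (hFD.comp_tendsto hpair).trans
      (hnorm.mul (isBigO_of_le (l := 𝓝 0) (g := fun ε => x ε - x₀ ε) fun ε => by simp))
    refine hdefect.neg_left.congr' ?_ EventuallyEq.rfl
    filter_upwards [hzero₀, hzero] with ε h₀ h
    have hvec : ((x ε, ε) - (x₀ ε, ε) : ℝ × ℝ) = (x ε - x₀ ε) • ((1 : ℝ), (0 : ℝ)) := by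
      ext <;> simp
    simp only [Function.comp, hvec, map_smul, hD, smul_eq_mul, r]
    linear_combination h₀ - h
  have hdiff : (fun ε => x ε - x₀ ε) =O[𝓝 0] (· ^ 4) := by
    have hsmall : (fun ε => ε ^ 1 * (x ε - x₀ ε)) =o[𝓝 0] fun ε => x ε - x₀ ε := by
      simpa using ((isLittleO_one_iff ℝ).2 ((continuous_pow 1).tendsto' (0 : ℝ) 0 (by simp))
        |>.mul_isBigO (isBigO_refl (fun ε => x ε - x₀ ε) (𝓝 0)))
    refine ((hr.trans_isLittleO hsmall).const_mul_left T₁⁻¹).right_isBigO_sub.trans ?_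
    exact ((hB4.const_mul_left (s / T₁)).neg_left).congr_left fun ε => by
      simp only [r]; field_simp; ring
  have hr5 : r =O[𝓝 0] (· ^ 5) := hr.trans ((isBigO_refl (· ^ 1) _).mul_pow_of_le hdiff le_rfl)
  refine (isBigO_const_mul_left_iff hT₁).1 ?_
  exact (hr5.sub (hBx.const_mul_left s)).congr_left fun ε => by simp only [r]; field_simp; ring

end ZeroCurve

theorem eventually_abs_lt {d e : ℝ} (hd : 0 < d) (he : 0 < e) :
    ∀ᶠ q : ℝ × ℝ in 𝓝 0, |q.1| < d ∧ |q.2| < e :=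
  ((continuous_abs.comp continuous_fst).continuousAt.eventually_lt continuousAt_const
    (by simpa using hd)).and
  ((continuous_abs.comp continuous_snd).continuousAt.eventually_lt continuousAt_const
    (by simpa using he))

def shifted (μb : ℝ) (f : ℝ → ℝ → ℝ) (q : ℝ × ℝ) : ℝ := f (μb + q.1) q.2

namespace AssumptionH

variable {μb ωs δ₀ ε₀ : ℝ} {α β γ : ℝ → ℝ → ℝ} {α₁ α₂ β₁ β₂ β₃ γ₁ γ₂ : ℝ}

theorem trace_sub_isBigO (hH : AssumptionH μb ωs δ₀ ε₀ α β γ α₁ α₂ β₁ β₂ β₃ γ₁ γ₂) :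
    (fun q => shifted μb (α + γ) q - ((α₁ + γ₁) * q.1 + (α₂ + γ₂) * q.2 ^ 2)) =O[𝓝 0]
      traceWeight := by
  obtain ⟨α₀, γ₀, d, hd, e, he, C, -, -, -, hbd⟩ := hH.hexp
  refine IsBigO.of_bound (2 * C) ?_
  filter_upwards [eventually_abs_lt hd.1 he.1] with q ⟨hq₁, hq₂⟩
  obtain ⟨hα, -, hγ, hα₀, hγ₀⟩ := hbd q.1 q.2 hq₁ hq₂
  rw [Real.norm_eq_abs, Real.norm_of_nonneg (by unfold traceWeight; positivity), traceWeight]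
  rw [abs_le] at hα hγ hα₀ hγ₀ ⊢
  simp only [shifted, Pi.add_apply]
  constructor <;> linarith

theorem beta_sub_isBigO (hH : AssumptionH μb ωs δ₀ ε₀ α β γ α₁ α₂ β₁ β₂ β₃ γ₁ γ₂)
    (hβ₁ : β₁ = 0) :
    (fun q => shifted μb β q - (β₂ * q.1 * q.2 ^ 2 + β₃ * q.2 ^ 4)) =O[𝓝 0] betaWeight := by
  obtain ⟨α₀, γ₀, d, hd, e, he, C, -, -, -, hbd⟩ := hH.hexp
  refine IsBigO.of_bound C ?_
  filter_upwards [eventually_abs_lt hd.1 he.1] with q ⟨hq₁, hq₂⟩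
  have hβ := (hbd q.1 q.2 hq₁ hq₂).2.1
  rw [hβ₁, zero_mul, zero_add] at hβ
  rwa [Real.norm_eq_abs, Real.norm_of_nonneg (by unfold betaWeight; positivity)]

theorem trace_zero (hH : AssumptionH μb ωs δ₀ ε₀ α β γ α₁ α₂ β₁ β₂ β₃ γ₁ γ₂) :
    α μb 0 + γ μb 0 = 0 := by
  simpa [shifted, traceWeight] using hH.trace_sub_isBigO.eq_zero_imp.self_of_nhds

theorem beta_zero (hH : AssumptionH μb ωs δ₀ ε₀ α β γ α₁ α₂ β₁ β₂ β₃ γ₁ γ₂) (hβ₁ : β₁ = 0) :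
    β μb 0 = 0 := by
  simpa [shifted, betaWeight] using (hH.beta_sub_isBigO hβ₁).eq_zero_imp.self_of_nhds

theorem analyticAt_trace (hH : AssumptionH μb ωs δ₀ ε₀ α β γ α₁ α₂ β₁ β₂ β₃ γ₁ γ₂) :
    AnalyticAt ℝ (shifted μb (α + γ)) 0 := by
  have hmem : (μb + (0 : ℝ × ℝ).1, (0 : ℝ × ℝ).2) ∈ Ioo (μb - δ₀) (μb + δ₀) ×ˢ Ioo (-ε₀) ε₀ := by
    simp [hH.hδ₀, hH.hε₀]
  have hshift : AnalyticAt ℝ (fun q : ℝ × ℝ => (μb + q.1, q.2)) 0 :=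
    (analyticAt_const.add analyticAt_fst).prod analyticAt_snd
  exact ((hH.hα_an _ hmem).comp (f := fun q : ℝ × ℝ => (μb + q.1, q.2)) hshift).add
    ((hH.hγ_an _ hmem).comp (f := fun q : ℝ × ℝ => (μb + q.1, q.2)) hshift)

theorem trace_sub_sub_fderiv_isBigO
    (hH : AssumptionH μb ωs δ₀ ε₀ α β γ α₁ α₂ β₁ β₂ β₃ γ₁ γ₂) :
    (fun y : (ℝ × ℝ) × (ℝ × ℝ) => shifted μb (α + γ) y.1 - shifted μb (α + γ) y.2 -
      fderiv ℝ (shifted μb (α + γ)) 0 (y.1 - y.2)) =O[𝓝 0] fun y => ‖y‖ * ‖y.1 - y.2‖ := by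
  obtain ⟨p, hp⟩ := hH.analyticAt_trace
  simpa only [Prod.mk_zero_zero, sub_zero] using hp.isBigO_sub_sub_fderiv

theorem fderiv_trace_apply_one_zero
    (hH : AssumptionH μb ωs δ₀ ε₀ α β γ α₁ α₂ β₁ β₂ β₃ γ₁ γ₂) :
    fderiv ℝ (shifted μb (α + γ)) 0 (1, 0) = α₁ + γ₁ := by
  refine fderiv_apply_one_zero_eq hH.analyticAt_trace.differentiableAt ?_
  have hslice : Tendsto (fun t : ℝ => (t, (0 : ℝ))) (𝓝 0) (𝓝 0) :=
    tendsto_id.prodMk_nhds tendsto_const_nhds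
  simpa [traceWeight, Function.comp_def] using hH.trace_sub_isBigO.comp_tendsto hslice

end AssumptionH

theorem isBigO_sub_and_eventually_zero_of_graph {G : ℝ → ℝ → ℝ} {μc : ℝ → ℝ} {μb δ₀ ε₁ : ℝ}
    (hδ₀ : 0 < δ₀) (hε₁ : 0 < ε₁) (hμc : AnalyticOnNhd ℝ μc (Ioo (-ε₁) ε₁))
    (hmaps : ∀ ε ∈ Ioo (-ε₁) ε₁, μc ε ∈ Ioo (μb - δ₀) (μb + δ₀))
    (hG : ∀ μ ∈ Ioo (μb - δ₀) (μb + δ₀), ∀ ε ∈ Ioo (-ε₁) ε₁, G μ ε = 0 ↔ μ = μc ε)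
    (h0 : G μb 0 = 0) :
    (fun ε => μc ε - μb) =O[𝓝 0] (· ^ 1) ∧ ∀ᶠ ε in 𝓝 0, G (μc ε) ε = 0 := by
  have h0mem : (0 : ℝ) ∈ Ioo (-ε₁) ε₁ := ⟨neg_lt_zero.2 hε₁, hε₁⟩
  have hμc0 : μb = μc 0 := (hG μb ⟨by linarith, by linarith⟩ 0 h0mem).1 h0
  refine ⟨?_, ?_⟩
  · simpa [← hμc0] using (hμc 0 h0mem).differentiableAt.isBigO_sub
  · filter_upwards [Ioo_mem_nhds h0mem.1 h0mem.2] with ε hε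
    exact (hG _ (hmaps ε hε) ε hε).2 rfl

theorem stmt7 (μb ωs δ₀ ε₀ : ℝ) (α β γ : ℝ → ℝ → ℝ) (α₁ α₂ β₁ β₂ β₃ γ₁ γ₂ : ℝ)
    (hH : AssumptionH μb ωs δ₀ ε₀ α β γ α₁ α₂ β₁ β₂ β₃ γ₁ γ₂)
    (hβ₁ : β₁ = 0)
    (ε₁ : ℝ) (hε₁ : ε₁ ∈ Ioc (0 : ℝ) ε₀) (μ₀ μp μm : ℝ → ℝ)
    (hZ : ZeroCurves μb δ₀ α β γ ε₁ μ₀ μp μm) :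
    ∃ ε₂ ∈ Ioc (0 : ℝ) ε₁, ∃ C > (0 : ℝ), ∀ ε : ℝ, |ε| < ε₂ →
      |(μp ε - μ₀ ε) + 2 / (α₁ + γ₁) * (β₃ - β₂ * (α₂ + γ₂) / (α₁ + γ₁)) * ε ^ 4| ≤
        C * |ε| ^ 5 ∧
      |(μm ε - μ₀ ε) - 2 / (α₁ + γ₁) * (β₃ - β₂ * (α₂ + γ₂) / (α₁ + γ₁)) * ε ^ 4| ≤
        C * |ε| ^ 5 := by
  have hF := hH.trace_sub_isBigO
  have hB := hH.beta_sub_isBigO hβ₁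
  have hFD := hH.trace_sub_sub_fderiv_isBigO
  have hD := hH.fderiv_trace_apply_one_zero
  have hβ0 := hH.beta_zero hβ₁
  obtain ⟨hx₀, hzero₀⟩ := isBigO_sub_and_eventually_zero_of_graph hH.hδ₀ hε₁.1 hZ.hμ₀_an
    hZ.hmaps₀ (fun μ hμ ε hε => (hZ.hT μ hμ ε hε).1) hH.trace_zero
  obtain ⟨hxp, hzerop⟩ := isBigO_sub_and_eventually_zero_of_graph hH.hδ₀ hε₁.1 hZ.hμp_an
    hZ.hmapsp (fun μ hμ ε hε => (hZ.hdp μ hμ ε hε).1) (by rw [hH.trace_zero, hβ0]; ring)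
  obtain ⟨hxm, hzerom⟩ := isBigO_sub_and_eventually_zero_of_graph hH.hδ₀ hε₁.1 hZ.hμm_an
    hZ.hmapsm (fun μ hμ ε hε => (hZ.hdm μ hμ ε hε).1) (by rw [hH.trace_zero, hβ0]; ring)
  have hplus := zero_curve_sub_isBigO (s := 2) hH.hT₁.ne' hF hB hFD hD hx₀ hxp
    (by simpa [shifted] using hzero₀) (by simpa [shifted] using hzerop)
  have hminus := zero_curve_sub_isBigO (s := -2) hH.hT₁.ne' hF hB hFD hD hx₀ hxm
    (by simpa [shifted] using hzero₀) (by simpa [shifted, ← sub_eq_add_neg] using hzerom)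
  exact exists_abs_le_of_isBigO hε₁.1 (hplus.congr_left fun ε => by ring)
    (hminus.congr_left fun ε => by ring)
end

section
/- Let ρ₁, ρ₂, ρ₃, ρ₄, ρ₅ be real analytic functions near 0 with, for some C > 0 and all small ε, |ρ₁(ε)| ≤ C|ε|, |ρ₃(ε)| ≤ C|ε|, and |ρ₂(ε)| ≤ Cε², |ρ₄(ε)| ≤ Cε², |ρ₅(ε)| ≤ Cε². For small ε ≠ 0 and ν ∈ ℝ such that Q(ν,ε) := 4(β₃ − β₂T₂/T₁)²ε⁸(1+ρ₁(ε)) − T₁²ν²(1+ρ₂(ε)) + 8β₂(β₃ − β₂T₂/T₁)νε⁶(1+ρ₃(ε)) ≥ 0, set x±(ν,ε) := ±(1/2)√(Q(ν,ε)) and y(ν,ε) := ω* + ((γ₂−α₂)/2 − T₂(γ₁−α₁)/(2T₁))ε²(1+ρ₄(ε)) + ((γ₁−α₁)/2)ν(1+ρ₅(ε)). Then there exist ε₂ > 0, a constant C' > 0 and real analytic functions σ₁, σ₂, y₀ on (−ε₂,ε₂) with |σ₁(ε)| ≤ C'ε², |σ₂(ε)| ≤ C'|ε| and |y₀(ε)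 − ω* − ((γ₂−α₂)/2 − T₂(γ₁−α₁)/(2T₁))ε²| ≤ C'ε⁴, such that for all 0 < |ε| < ε₂ and all ν with Q(ν,ε) ≥ 0: x±(ν,ε)² + (T₁²(1+σ₁(ε))/(γ₁−α₁)²)·(y(ν,ε) − y₀(ε))² = (β₃ − β₂T₂/T₁)²ε⁸(1+σ₂(ε)); that is, the parametrized curve (x±(ν,ε), y(ν,ε)) lies on an ellipse centered at (0, y₀(ε)). -/
/-!
For fixed `ε`, `Q(ν, ε) / 4` is a concave quadratic in `ν` and `y(ν, ε)` is affine in `ν` with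
slope `(γ₁ - α₁)(1 + ρ₅ ε) / 2`. Completing the square at the vertex
`ν₀ = 4 β₂ K ε⁶ (1 + ρ₃) / (T₁² (1 + ρ₂))`, where `K = β₃ - β₂ T₂ / T₁`, gives
`Q / 4 + T₁² (1 + ρ₂) (ν - ν₀)² / 4 = K² ε⁸ (1 + ρ₁) + T₁² (1 + ρ₂) ν₀² / 4`, and substituting
`ν - ν₀ = 2 (y - y₀) / ((γ₁ - α₁)(1 + ρ₅))` with `y₀ = y(ν₀, ε)` turns this into the ellipse with
`σ₁ = (1 + ρ₂) / (1 + ρ₅)² - 1` and `σ₂ = ρ₁ + 4 β₂² ε⁴ (1 + ρ₃)² / (T₁² (1 + ρ₂))`.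
The bounds on `σ₁`, `σ₂`, `y₀` follow from `O`-calculus at `0`, and all three are analytic
wherever `1 + ρ₂` and `1 + ρ₅` do not vanish.
-/

open Set Filter Topology Asymptotics

noncomputable section

def axisRatioCorrection (ρ₂ ρ₅ : ℝ → ℝ) (ε : ℝ) : ℝ := (1 + ρ₂ ε) / (1 + ρ₅ ε) ^ 2 - 1

def radiusCorrection (T₁ β₂ : ℝ) (ρ₁ ρ₂ ρ₃ : ℝ → ℝ) (ε : ℝ) : ℝ :=
  ρ₁ ε + 4 * β₂ ^ 2 * ε ^ 4 * (1 + ρ₃ ε) ^ 2 / (T₁ ^ 2 * (1 + ρ₂ ε))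

def vertexParam (T₁ β₂ K : ℝ) (ρ₂ ρ₃ : ℝ → ℝ) (ε : ℝ) : ℝ :=
  4 * β₂ * K * ε ^ 6 * (1 + ρ₃ ε) / (T₁ ^ 2 * (1 + ρ₂ ε))

end

section Ellipse

variable {T₁ β₂ K g : ℝ} {ρ₁ ρ₂ ρ₃ ρ₅ w : ℝ → ℝ} {y : ℝ → ℝ → ℝ}

theorem sqrt_half_sq_add_sq_eq_of_quadratic {Q ε ν : ℝ} (hT₁ : T₁ ≠ 0) (hg : g ≠ 0)
    (h₂ : 1 + ρ₂ ε ≠ 0) (h₅ : 1 + ρ₅ ε ≠ 0)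
    (hQ : Q = 4 * K ^ 2 * ε ^ 8 * (1 + ρ₁ ε) - T₁ ^ 2 * ν ^ 2 * (1 + ρ₂ ε) +
      8 * β₂ * K * ν * ε ^ 6 * (1 + ρ₃ ε)) (hQ₀ : 0 ≤ Q)
    (hy : ∀ ν ε, y ν ε = w ε + g / 2 * ν * (1 + ρ₅ ε)) :
    (Real.sqrt Q / 2) ^ 2 + T₁ ^ 2 * (1 + axisRatioCorrection ρ₂ ρ₅ ε) / g ^ 2 *
        (y ν ε - y (vertexParam T₁ β₂ K ρ₂ ρ₃ ε) ε) ^ 2 =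
      K ^ 2 * ε ^ 8 * (1 + radiusCorrection T₁ β₂ ρ₁ ρ₂ ρ₃ ε) := by
  rw [div_pow, Real.sq_sqrt hQ₀, hQ, hy, hy]
  unfold axisRatioCorrection vertexParam radiusCorrection
  field_simp
  ring

theorem eventually_analyticAt_ellipse_data (hT₁ : T₁ ≠ 0) (h₁ : AnalyticAt ℝ ρ₁ 0)
    (h₂ : AnalyticAt ℝ ρ₂ 0) (h₃ : AnalyticAt ℝ ρ₃ 0) (h₅ : AnalyticAt ℝ ρ₅ 0)
    (hw : AnalyticAt ℝ w 0) (h₂₀ : Tendsto ρ₂ (𝓝 0) (𝓝 0)) (h₅₀ : Tendsto ρ₅ (𝓝 0) (𝓝 0))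
    (hy : ∀ ν ε, y ν ε = w ε + g / 2 * ν * (1 + ρ₅ ε)) :
    ∀ᶠ ε in 𝓝 0, (AnalyticAt ℝ (axisRatioCorrection ρ₂ ρ₅) ε ∧
      AnalyticAt ℝ (radiusCorrection T₁ β₂ ρ₁ ρ₂ ρ₃) ε ∧
      AnalyticAt ℝ (fun ε => y (vertexParam T₁ β₂ K ρ₂ ρ₃ ε) ε) ε) ∧
      1 + ρ₂ ε ≠ 0 ∧ 1 + ρ₅ ε ≠ 0 := by
  filter_upwards [h₁.eventually_analyticAt, h₂.eventually_analyticAt, h₃.eventually_analyticAt,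
    h₅.eventually_analyticAt, hw.eventually_analyticAt,
    (tendsto_const_nhds.add h₂₀).eventually_ne (by norm_num : (1 : ℝ) + 0 ≠ 0),
    (tendsto_const_nhds.add h₅₀).eventually_ne (by norm_num : (1 : ℝ) + 0 ≠ 0)]
    with ε a₁ a₂ a₃ a₅ aw n₂ n₅
  have hden : T₁ ^ 2 * (1 + ρ₂ ε) ≠ 0 := mul_ne_zero (pow_ne_zero 2 hT₁) n₂
  refine ⟨⟨?_, ?_, ?_⟩, n₂, n₅⟩
  · unfold axisRatioCorrection
    fun_prop (disch := exact pow_ne_zero 2 n₅)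
  · unfold radiusCorrection
    fun_prop (disch := exact hden)
  · simp only [hy, vertexParam]
    fun_prop (disch := exact hden)

end Ellipse

theorem Asymptotics.IsBigO.mul_tendsto {α : Type*} {f g h : α → ℝ} {l : Filter α} {c : ℝ}
    (hfg : f =O[l] g) (hh : Tendsto h l (𝓝 c)) : (fun x => f x * h x) =O[l] g := by
  simpa using hfg.mul (hh.isBigO_one ℝ)

theorem Asymptotics.IsBigO.tendsto_zero_of_pow_s12 {f : ℝ → ℝ} {n : ℕ} (hn : n ≠ 0)
    (h : f =O[𝓝 0] (· ^ n)) : Tendsto f (𝓝 0) (𝓝 0) :=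
  h.trans_tendsto (by simpa [hn] using (continuous_pow n).tendsto (0 : ℝ))

theorem isBigO_nhds_zero_of_abs_le {f g : ℝ → ℝ} {C e : ℝ} (he : 0 < e)
    (h : ∀ ε, |ε| < e → |f ε| ≤ C * |g ε|) : f =O[𝓝 0] g :=
  .of_bound C <| by
    filter_upwards [Metric.ball_mem_nhds (0 : ℝ) he] with ε hε
    exact h ε (by simpa using hε)

section Asymptotics

variable {T₁ β₂ K : ℝ} {ρ₁ ρ₂ ρ₃ ρ₄ ρ₅ : ℝ → ℝ}

theorem axisRatioCorrection_isBigO (h₂ : ρ₂ =O[𝓝 0] (· ^ 2)) (h₅ : ρ₅ =O[𝓝 0] (· ^ 2)) :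
    axisRatioCorrection ρ₂ ρ₅ =O[𝓝 0] (· ^ 2) := by
  have h₅₁ : Tendsto (fun ε => 1 + ρ₅ ε) (𝓝 0) (𝓝 1) := by
    simpa using tendsto_const_nhds.add (h₅.tendsto_zero_of_pow_s12 two_ne_zero)
  -- `σ₁ = (ρ₂ - ρ₅ (2 + ρ₅)) / (1 + ρ₅)²` wherever `1 + ρ₅ ≠ 0`
  have hnum : (fun ε => ρ₂ ε - ρ₅ ε * (1 + (1 + ρ₅ ε))) =O[𝓝 0] (· ^ 2) :=
    h₂.sub (h₅.mul_tendsto (tendsto_const_nhds.add h₅₁))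
  refine (hnum.mul_tendsto ((h₅₁.pow 2).inv₀ (by norm_num))).congr' ?_ EventuallyEq.rfl
  filter_upwards [h₅₁.eventually_ne one_ne_zero] with ε hε
  unfold axisRatioCorrection
  field_simp
  ring

theorem radiusCorrection_isBigO (hT₁ : T₁ ≠ 0) (h₁ : ρ₁ =O[𝓝 0] id)
    (h₂ : Tendsto ρ₂ (𝓝 0) (𝓝 0)) (h₃ : Tendsto ρ₃ (𝓝 0) (𝓝 0)) :
    radiusCorrection T₁ β₂ ρ₁ ρ₂ ρ₃ =O[𝓝 0] id := by
  have hlim : Tendsto (fun ε => 4 * β₂ ^ 2 * (1 + ρ₃ ε) ^ 2 / (T₁ ^ 2 * (1 + ρ₂ ε))) (𝓝 0)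
      (𝓝 (4 * β₂ ^ 2 * (1 + 0) ^ 2 / (T₁ ^ 2 * (1 + 0)))) :=
    (tendsto_const_nhds.mul ((tendsto_const_nhds.add h₃).pow 2)).div
      (tendsto_const_nhds.mul (tendsto_const_nhds.add h₂)) (by simpa using hT₁)
  refine (h₁.add ((isLittleO_pow_id (by norm_num : 1 < 4)).isBigO.mul_tendsto hlim)).congr_left
    fun ε => ?_
  unfold radiusCorrection
  ring

theorem vertexParam_isBigO (hT₁ : T₁ ≠ 0) (h₂ : Tendsto ρ₂ (𝓝 0) (𝓝 0))
    (h₃ : Tendsto ρ₃ (𝓝 0) (𝓝 0)) : vertexParam T₁ β₂ K ρ₂ ρ₃ =O[𝓝 0] (· ^ 6) := by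
  have hlim : Tendsto (fun ε => 4 * β₂ * K * (1 + ρ₃ ε) / (T₁ ^ 2 * (1 + ρ₂ ε))) (𝓝 0)
      (𝓝 (4 * β₂ * K * (1 + 0) / (T₁ ^ 2 * (1 + 0)))) :=
    (tendsto_const_nhds.mul (tendsto_const_nhds.add h₃)).div
      (tendsto_const_nhds.mul (tendsto_const_nhds.add h₂)) (by simpa using hT₁)
  refine ((isBigO_refl (· ^ 6) _).mul_tendsto hlim).congr_left fun ε => ?_
  unfold vertexParam
  ring

theorem center_sub_isBigO {ν₀ : ℝ → ℝ} (B g : ℝ) (hν₀ : ν₀ =O[𝓝 0] (· ^ 6))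
    (h₄ : ρ₄ =O[𝓝 0] (· ^ 2)) (h₅ : Tendsto ρ₅ (𝓝 0) (𝓝 0)) :
    (fun ε => B * ε ^ 2 * (1 + ρ₄ ε) + g / 2 * ν₀ ε * (1 + ρ₅ ε) - B * ε ^ 2)
      =O[𝓝 0] (· ^ 4) := by
  have h₄' : (fun ε => ε ^ 2 * ρ₄ ε) =O[𝓝 0] (· ^ 4) :=
    ((isBigO_refl (· ^ 2) _).mul h₄).congr_right fun ε => by ring
  have hν : (fun ε => ν₀ ε * (1 + ρ₅ ε)) =O[𝓝 0] (· ^ 4) :=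
    (hν₀.mul_tendsto (tendsto_const_nhds.add h₅)).trans (isLittleO_pow_pow (by norm_num)).isBigO
  refine ((h₄'.const_mul_left B).add (hν.const_mul_left (g / 2))).congr_left fun ε => ?_
  ring

end Asymptotics

theorem exists_Ioo_bounds {σ₁ σ₂ δ : ℝ → ℝ} {p : ℝ → Prop} (h₁ : σ₁ =O[𝓝 0] (· ^ 2))
    (h₂ : σ₂ =O[𝓝 0] id) (h₃ : δ =O[𝓝 0] (· ^ 4)) (hp : ∀ᶠ ε in 𝓝 0, p ε) :
    ∃ r > 0, ∃ C > 0, ∀ ε ∈ Ioo (-r) r,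
      (|σ₁ ε| ≤ C * ε ^ 2 ∧ |σ₂ ε| ≤ C * |ε| ∧ |δ ε| ≤ C * ε ^ 4) ∧ p ε := by
  obtain ⟨c₁, hc₁, h₁⟩ := h₁.exists_pos
  obtain ⟨c₂, -, h₂⟩ := h₂.exists_pos
  obtain ⟨c₃, -, h₃⟩ := h₃.exists_pos
  set C := max c₁ (max c₂ c₃)
  have hev : ∀ᶠ ε in 𝓝 0,
      (|σ₁ ε| ≤ C * ε ^ 2 ∧ |σ₂ ε| ≤ C * |ε| ∧ |δ ε| ≤ C * ε ^ 4) ∧ p ε := by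
    filter_upwards [(h₁.weaken (le_max_left _ _)).bound,
      (h₂.weaken ((le_max_left _ _).trans (le_max_right _ _))).bound,
      (h₃.weaken ((le_max_right _ _).trans (le_max_right _ _))).bound, hp] with ε h₁ h₂ h₃ hp
    simp only [Real.norm_eq_abs, abs_pow, sq_abs, id] at h₁ h₂ h₃
    rw [Even.pow_abs ⟨2, rfl⟩] at h₃
    exact ⟨⟨h₁, h₂, h₃⟩, hp⟩
  obtain ⟨r, hr, h⟩ := Metric.eventually_nhds_iff_ball.mp hev
  exact ⟨r, hr, C, hc₁.trans_le (le_max_left _ _), fun ε hε => h ε (by simpa [Real.ball_eq_Ioo])⟩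

theorem stmt12_general (ωs T₁ T₂ α₁ α₂ γ₁ γ₂ β₂ β₃ : ℝ)
    (hT₁ : 0 < T₁) (hγα : γ₁ ≠ α₁)
    (ρ₁ ρ₂ ρ₃ ρ₄ ρ₅ : ℝ → ℝ)
    (h₁an : AnalyticAt ℝ ρ₁ 0) (h₂an : AnalyticAt ℝ ρ₂ 0) (h₃an : AnalyticAt ℝ ρ₃ 0)
    (h₄an : AnalyticAt ℝ ρ₄ 0) (h₅an : AnalyticAt ℝ ρ₅ 0)
    (C e : ℝ) (he : 0 < e)
    (hb : ∀ ε : ℝ, |ε| < e →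
      |ρ₁ ε| ≤ C * |ε| ∧ |ρ₃ ε| ≤ C * |ε| ∧
      |ρ₂ ε| ≤ C * ε ^ 2 ∧ |ρ₄ ε| ≤ C * ε ^ 2 ∧ |ρ₅ ε| ≤ C * ε ^ 2)
    (Q : ℝ → ℝ → ℝ)
    (hQ : ∀ ν ε : ℝ, Q ν ε =
      4 * (β₃ - β₂ * T₂ / T₁) ^ 2 * ε ^ 8 * (1 + ρ₁ ε) -
        T₁ ^ 2 * ν ^ 2 * (1 + ρ₂ ε) +
        8 * β₂ * (β₃ - β₂ * T₂ / T₁) * ν * ε ^ 6 * (1 + ρ₃ ε))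
    (y : ℝ → ℝ → ℝ)
    (hy : ∀ ν ε : ℝ, y ν ε =
      ωs + ((γ₂ - α₂) / 2 - T₂ * (γ₁ - α₁) / (2 * T₁)) * ε ^ 2 * (1 + ρ₄ ε) +
        (γ₁ - α₁) / 2 * ν * (1 + ρ₅ ε)) :
    ∃ ε₂ > (0 : ℝ), ∃ C' > (0 : ℝ), ∃ σ₁ σ₂ y₀ : ℝ → ℝ,
      AnalyticOnNhd ℝ σ₁ (Ioo (-ε₂) ε₂) ∧
      AnalyticOnNhd ℝ σ₂ (Ioo (-ε₂) ε₂) ∧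
      AnalyticOnNhd ℝ y₀ (Ioo (-ε₂) ε₂) ∧
      (∀ ε ∈ Ioo (-ε₂) ε₂,
        |σ₁ ε| ≤ C' * ε ^ 2 ∧ |σ₂ ε| ≤ C' * |ε| ∧
        |y₀ ε - ωs - ((γ₂ - α₂) / 2 - T₂ * (γ₁ - α₁) / (2 * T₁)) * ε ^ 2| ≤ C' * ε ^ 4) ∧
      ∀ ε : ℝ, 0 < |ε| → |ε| < ε₂ → ∀ ν : ℝ, 0 ≤ Q ν ε →
        (Real.sqrt (Q ν ε) / 2) ^ 2 +
            T₁ ^ 2 * (1 + σ₁ ε) / (γ₁ - α₁) ^ 2 * (y ν ε - y₀ ε) ^ 2 =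
          (β₃ - β₂ * T₂ / T₁) ^ 2 * ε ^ 8 * (1 + σ₂ ε) ∧
        (-(Real.sqrt (Q ν ε) / 2)) ^ 2 +
            T₁ ^ 2 * (1 + σ₁ ε) / (γ₁ - α₁) ^ 2 * (y ν ε - y₀ ε) ^ 2 =
          (β₃ - β₂ * T₂ / T₁) ^ 2 * ε ^ 8 * (1 + σ₂ ε) := by
  have hρ₁ : ρ₁ =O[𝓝 0] id :=
    isBigO_nhds_zero_of_abs_le he fun ε hε => by simpa using (hb ε hε).1
  have hρ₃ : ρ₃ =O[𝓝 0] id :=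
    isBigO_nhds_zero_of_abs_le he fun ε hε => by simpa using (hb ε hε).2.1
  have hρ₂ : ρ₂ =O[𝓝 0] (· ^ 2) :=
    isBigO_nhds_zero_of_abs_le he fun ε hε => by simpa using (hb ε hε).2.2.1
  have hρ₄ : ρ₄ =O[𝓝 0] (· ^ 2) :=
    isBigO_nhds_zero_of_abs_le he fun ε hε => by simpa using (hb ε hε).2.2.2.1
  have hρ₅ : ρ₅ =O[𝓝 0] (· ^ 2) :=
    isBigO_nhds_zero_of_abs_le he fun ε hε => by simpa using (hb ε hε).2.2.2.2
  have hρ₂₀ := hρ₂.tendsto_zero_of_pow_s12 two_ne_zero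
  have hρ₃₀ := hρ₃.trans_tendsto tendsto_id
  have hρ₅₀ := hρ₅.tendsto_zero_of_pow_s12 two_ne_zero
  set B := (γ₂ - α₂) / 2 - T₂ * (γ₁ - α₁) / (2 * T₁)
  set ν₀ := vertexParam T₁ β₂ (β₃ - β₂ * T₂ / T₁) ρ₂ ρ₃
  have hy₀ : (fun ε => y (ν₀ ε) ε - ωs - B * ε ^ 2) =O[𝓝 0] (· ^ 4) :=
    (center_sub_isBigO B (γ₁ - α₁) (vertexParam_isBigO hT₁.ne' hρ₂₀ hρ₃₀) hρ₄ hρ₅₀).congr_left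
      fun ε => by rw [hy]; ring
  obtain ⟨r, hr, C', hC', hball⟩ := exists_Ioo_bounds (axisRatioCorrection_isBigO hρ₂ hρ₅)
    (radiusCorrection_isBigO hT₁.ne' hρ₁ hρ₂₀ hρ₃₀) hy₀
    (eventually_analyticAt_ellipse_data hT₁.ne' h₁an h₂an h₃an h₅an (by fun_prop) hρ₂₀ hρ₅₀ hy)
  refine ⟨r, hr, C', hC', axisRatioCorrection ρ₂ ρ₅, radiusCorrection T₁ β₂ ρ₁ ρ₂ ρ₃,
    fun ε => y (ν₀ ε) ε, fun ε hε => (hball ε hε).2.1.1,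
    fun ε hε => (hball ε hε).2.1.2.1, fun ε hε => (hball ε hε).2.1.2.2, fun ε hε => (hball ε hε).1,
    fun ε _ hε ν hQν => ?_⟩
  obtain ⟨-, h₂, h₅⟩ := (hball ε (abs_lt.mp hε)).2
  have hx := sqrt_half_sq_add_sq_eq_of_quadratic hT₁.ne' (sub_ne_zero.mpr hγα) h₂ h₅ (hQ ν ε) hQν hy
  exact ⟨hx, by rwa [neg_sq]⟩

theorem stmt12 (ωs T₁ T₂ α₁ α₂ γ₁ γ₂ β₂ β₃ : ℝ)
    (hT₁ : 0 < T₁) (hγα : γ₁ ≠ α₁) (hK : β₃ - β₂ * T₂ / T₁ ≠ 0)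
    (ρ₁ ρ₂ ρ₃ ρ₄ ρ₅ : ℝ → ℝ)
    (h₁an : AnalyticAt ℝ ρ₁ 0) (h₂an : AnalyticAt ℝ ρ₂ 0) (h₃an : AnalyticAt ℝ ρ₃ 0)
    (h₄an : AnalyticAt ℝ ρ₄ 0) (h₅an : AnalyticAt ℝ ρ₅ 0)
    (C e : ℝ) (hC : 0 < C) (he : 0 < e)
    (hb : ∀ ε : ℝ, |ε| < e →
      |ρ₁ ε| ≤ C * |ε| ∧ |ρ₃ ε| ≤ C * |ε| ∧
      |ρ₂ ε| ≤ C * ε ^ 2 ∧ |ρ₄ ε| ≤ C * ε ^ 2 ∧ |ρ₅ ε| ≤ C * ε ^ 2)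
    (Q : ℝ → ℝ → ℝ)
    (hQ : ∀ ν ε : ℝ, Q ν ε =
      4 * (β₃ - β₂ * T₂ / T₁) ^ 2 * ε ^ 8 * (1 + ρ₁ ε) -
        T₁ ^ 2 * ν ^ 2 * (1 + ρ₂ ε) +
        8 * β₂ * (β₃ - β₂ * T₂ / T₁) * ν * ε ^ 6 * (1 + ρ₃ ε))
    (y : ℝ → ℝ → ℝ)
    (hy : ∀ ν ε : ℝ, y ν ε =
      ωs + ((γ₂ - α₂) / 2 - T₂ * (γ₁ - α₁) / (2 * T₁)) * ε ^ 2 * (1 + ρ₄ ε) +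
        (γ₁ - α₁) / 2 * ν * (1 + ρ₅ ε)) :
    ∃ ε₂ > (0 : ℝ), ∃ C' > (0 : ℝ), ∃ σ₁ σ₂ y₀ : ℝ → ℝ,
      AnalyticOnNhd ℝ σ₁ (Ioo (-ε₂) ε₂) ∧
      AnalyticOnNhd ℝ σ₂ (Ioo (-ε₂) ε₂) ∧
      AnalyticOnNhd ℝ y₀ (Ioo (-ε₂) ε₂) ∧
      (∀ ε ∈ Ioo (-ε₂) ε₂,
        |σ₁ ε| ≤ C' * ε ^ 2 ∧ |σ₂ ε| ≤ C' * |ε| ∧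
        |y₀ ε - ωs - ((γ₂ - α₂) / 2 - T₂ * (γ₁ - α₁) / (2 * T₁)) * ε ^ 2| ≤ C' * ε ^ 4) ∧
      ∀ ε : ℝ, 0 < |ε| → |ε| < ε₂ → ∀ ν : ℝ, 0 ≤ Q ν ε →
        (Real.sqrt (Q ν ε) / 2) ^ 2 +
            T₁ ^ 2 * (1 + σ₁ ε) / (γ₁ - α₁) ^ 2 * (y ν ε - y₀ ε) ^ 2 =
          (β₃ - β₂ * T₂ / T₁) ^ 2 * ε ^ 8 * (1 + σ₂ ε) ∧
        (-(Real.sqrt (Q ν ε) / 2)) ^ 2 +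
            T₁ ^ 2 * (1 + σ₁ ε) / (γ₁ - α₁) ^ 2 * (y ν ε - y₀ ε) ^ 2 =
          (β₃ - β₂ * T₂ / T₁) ^ 2 * ε ^ 8 * (1 + σ₂ ε) :=
  stmt12_general ωs T₁ T₂ α₁ α₂ γ₁ γ₂ β₂ β₃ hT₁ hγα ρ₁ ρ₂ ρ₃ ρ₄ ρ₅ h₁an h₂an h₃an h₄an h₅an C e he
    hb Q hQ y hy
end

section
/- For every real μ with 0 < μ < 1/2 and μ ≠ 1/4, the map (j,σ) ↦ ω_j^σ(μ) = j + μ − σ√|j+μ| is injective on ℤ × {−1,+1}; that is, if j, j' ∈ ℤ and σ, σ' ∈ {−1,+1} satisfy j + μ − σ√|j+μ| = j' + μ − σ'√|j'+μ|, then j = j' and σ = σ'. -/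
/-- `ω^σ_j(μ) = j + μ - σ √|j+μ|`. -/
noncomputable def omg (μ : ℝ) (j : ℤ) (σ : ℝ) : ℝ :=
  (j : ℝ) + μ - σ * Real.sqrt |(j : ℝ) + μ|

set_option maxHeartbeats 1000000 in
private lemma aux_mixed (μ : ℝ) (hμ0 : 0 < μ) (hμhalf : μ < 1 / 2)
    (j j' : ℤ) (hj : 0 ≤ j) (hj' : j' ≤ -1) (σ σ' : ℝ)
    (hσ : σ = -1 ∨ σ = 1) (hσ' : σ' = -1 ∨ σ' = 1)
    (heq : σ * Real.sqrt ((j : ℝ) + μ) - σ' * Real.sqrt (-((j' : ℝ) + μ)) = (j : ℝ) - (j' : ℝ)) :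
    False := by
  have hjR : (0 : ℝ) ≤ (j : ℝ) := by exact_mod_cast hj
  have hj'R : (j' : ℝ) ≤ -1 := by exact_mod_cast hj'
  set a := Real.sqrt ((j : ℝ) + μ) with hadef
  set b := Real.sqrt (-((j' : ℝ) + μ)) with hbdef
  have ha0 : 0 ≤ a := Real.sqrt_nonneg _
  have hb0 : 0 ≤ b := Real.sqrt_nonneg _
  have ha2 : a ^ 2 = (j : ℝ) + μ := Real.sq_sqrt (by linarith)
  have hb2 : b ^ 2 = -((j' : ℝ) + μ) := Real.sq_sqrt (by linarith)
  clear_value a b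
  have hsa : σ * a ≤ a := by rcases hσ with rfl | rfl <;> nlinarith
  have hsb : -(σ' * b) ≤ b := by rcases hσ' with rfl | rfl <;> nlinarith
  have hsqa : (σ * a) ^ 2 = a ^ 2 := by rcases hσ with rfl | rfl <;> ring
  have hk1 : (1 : ℝ) ≤ (j : ℝ) - j' := by linarith
  have hsum : a ^ 2 + b ^ 2 = (j : ℝ) - j' := by rw [ha2, hb2]; ring
  have hle : (j : ℝ) - j' ≤ a + b := by linarith
  have hk2 : (j : ℝ) - j' ≤ 2 := by nlinarith [sq_nonneg (a - b)]
  have hd : j - j' = 1 ∨ j - j' = 2 := by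
    have h2' : ((j - j' : ℤ) : ℝ) ≤ 2 := by push_cast; linarith
    have : j - j' ≤ 2 := by exact_mod_cast h2'
    omega
  rcases hd with hd | hd
  · -- j = 0, j' = -1
    have hj0 : j = 0 := by omega
    have hj'0 : j' = -1 := by omega
    subst hj0; subst hj'0
    push_cast at ha2 hb2 heq
    -- ha2 : a^2 = μ, hb2 : b^2 = 1 - μ, heq : σ*a - σ'*b = 1
    have ha2' : a ^ 2 = μ := by linarith
    have hb2' : b ^ 2 = 1 - μ := by linarith
    have heq' : σ * a - σ' * b = 1 := by linarith
    rcases hσ' with rfl | rfl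
    · -- σ' = -1 : σ*a + b = 1
      have hs : σ * a = 1 - b := by linarith
      have h1 : (1 - b) ^ 2 = μ := by rw [← hs, hsqa, ha2']
      have hexp : 1 - 2 * b + b ^ 2 = μ := by linear_combination h1
      have hb' : b = 1 - μ := by linarith
      rw [hb'] at hb2'
      nlinarith [hb2', mul_pos hμ0 (show (0 : ℝ) < 1 - μ by linarith)]
    · -- σ' = 1 : σ*a - b = 1
      have halt : a < 1 := by nlinarith
      linarith
  · -- j - j' = 2
    have hkR : (j : ℝ) - j' = 2 := by
      have : ((j - j' : ℤ) : ℝ) = 2 := by rw [hd]; norm_num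
      push_cast at this; linarith
    have hsum2 : a ^ 2 + b ^ 2 = 2 := by linarith
    have hge : (2 : ℝ) ≤ a + b := by linarith
    have hab : a + b = 2 := le_antisymm (by nlinarith [sq_nonneg (a - b)]) hge
    have hbval : b = 2 - a := by linarith
    rw [hbval] at hsum2
    have h0 : (a - 1) ^ 2 = 0 := by linear_combination hsum2 / 2
    have ha1 : a = 1 := by nlinarith [h0]
    have h1 : (1 : ℝ) = (j : ℝ) + μ := by rw [← ha2, ha1]; norm_num
    have hjpos : (0 : ℝ) < (j : ℝ) := by linarith
    have hjz : 0 < j := by exact_mod_cast hjpos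
    have hj1 : (1 : ℝ) ≤ (j : ℝ) := by exact_mod_cast hjz
    linarith

set_option maxHeartbeats 1000000 in
theorem stmt13 (μ : ℝ) (hμ0 : 0 < μ) (hμhalf : μ < 1 / 2) (hμquarter : μ ≠ 1 / 4)
    (j j' : ℤ) (σ σ' : ℝ) (hσ : σ = -1 ∨ σ = 1) (hσ' : σ' = -1 ∨ σ' = 1)
    (h : omg μ j σ = omg μ j' σ') :
    j = j' ∧ σ = σ' := by
  unfold omg at h
  by_cases hjj : j = j'
  · subst hjj
    refine ⟨rfl, ?_⟩
    have hne : (j : ℝ) + μ ≠ 0 := by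
      rcases le_or_gt 0 j with hj | hj
      · have : (0 : ℝ) ≤ (j : ℝ) := by exact_mod_cast hj
        positivity
      · have : (j : ℝ) ≤ -1 := by exact_mod_cast (by omega : j ≤ -1)
        intro h0; linarith
    have hapos : 0 < Real.sqrt |(j : ℝ) + μ| := Real.sqrt_pos.mpr (abs_pos.mpr hne)
    have hcan : σ * Real.sqrt |(j : ℝ) + μ| = σ' * Real.sqrt |(j : ℝ) + μ| := by linarith
    exact mul_right_cancel₀ (ne_of_gt hapos) hcan
  · exfalso
    have hk : σ * Real.sqrt |(j : ℝ) + μ| - σ' * Real.sqrt |(j' : ℝ) + μ| = (j : ℝ) - j' := by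
      linarith
    have hkne : ((j : ℝ) - j') ≠ 0 := sub_ne_zero.mpr (by exact_mod_cast hjj)
    have hsqa : ∀ x : ℝ, (σ * x) ^ 2 = x ^ 2 := by
      intro x; rcases hσ with rfl | rfl <;> ring
    have hsqb : ∀ x : ℝ, (σ' * x) ^ 2 = x ^ 2 := by
      intro x; rcases hσ' with rfl | rfl <;> ring
    rcases le_or_gt 0 j with hj | hj <;> rcases le_or_gt 0 j' with hj' | hj'
    · -- both nonnegative
      have hjR : (0 : ℝ) ≤ (j : ℝ) := by exact_mod_cast hj
      have hj'R : (0 : ℝ) ≤ (j' : ℝ) := by exact_mod_cast hj'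
      have e1 : |(j : ℝ) + μ| = (j : ℝ) + μ := abs_of_pos (by linarith)
      have e2 : |(j' : ℝ) + μ| = (j' : ℝ) + μ := abs_of_pos (by linarith)
      rw [e1, e2] at hk
      set a := Real.sqrt ((j : ℝ) + μ) with hadef
      set b := Real.sqrt ((j' : ℝ) + μ) with hbdef
      have ha2 : a ^ 2 = (j : ℝ) + μ := Real.sq_sqrt (by linarith)
      have hb2 : b ^ 2 = (j' : ℝ) + μ := Real.sq_sqrt (by linarith)
      clear_value a b
      have hprod : ((j : ℝ) - j') * (σ * a + σ' * b) = ((j : ℝ) - j') * 1 := by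
        calc ((j : ℝ) - j') * (σ * a + σ' * b)
            = (σ * a - σ' * b) * (σ * a + σ' * b) := by rw [hk]
          _ = (σ * a) ^ 2 - (σ' * b) ^ 2 := by ring
          _ = ((j : ℝ) + μ) - ((j' : ℝ) + μ) := by rw [hsqa, hsqb, ha2, hb2]
          _ = ((j : ℝ) - j') * 1 := by ring
      have hs : σ * a + σ' * b = 1 := mul_left_cancel₀ hkne hprod
      have h2a : 2 * (σ * a) = (j : ℝ) - j' + 1 := by linarith
      have heq4 : 4 * ((j : ℝ) + μ) = ((j : ℝ) - j' + 1) ^ 2 := by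
        calc 4 * ((j : ℝ) + μ) = 4 * (σ * a) ^ 2 := by rw [hsqa, ha2]
          _ = (2 * (σ * a)) ^ 2 := by ring
          _ = ((j : ℝ) - j' + 1) ^ 2 := by rw [h2a]
      have hn : (((j - j' + 1) ^ 2 - 4 * j : ℤ) : ℝ) = 4 * μ := by
        push_cast; linear_combination -heq4
      have hn1 : ((j - j' + 1) ^ 2 - 4 * j : ℤ) = 1 := by
        have h1 : (0 : ℝ) < (((j - j' + 1) ^ 2 - 4 * j : ℤ) : ℝ) := by rw [hn]; linarith
        have h2 : (((j - j' + 1) ^ 2 - 4 * j : ℤ) : ℝ) < 2 := by rw [hn]; linarith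
        have h1' : 0 < (j - j' + 1) ^ 2 - 4 * j := by exact_mod_cast h1
        have h2' : (j - j' + 1) ^ 2 - 4 * j < 2 := by exact_mod_cast h2
        omega
      rw [hn1] at hn
      push_cast at hn
      exact hμquarter (by linarith)
    · -- j ≥ 0, j' ≤ -1
      have hjR : (0 : ℝ) ≤ (j : ℝ) := by exact_mod_cast hj
      have hj'R : (j' : ℝ) ≤ -1 := by exact_mod_cast (by omega : j' ≤ -1)
      have e1 : |(j : ℝ) + μ| = (j : ℝ) + μ := abs_of_pos (by linarith)
      have e2 : |(j' : ℝ) + μ| = -((j' : ℝ) + μ) := abs_of_neg (by linarith)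
      rw [e1, e2] at hk
      exact aux_mixed μ hμ0 hμhalf j j' hj (by omega) σ σ' hσ hσ' hk
    · -- j ≤ -1, j' ≥ 0
      have hjR : (j : ℝ) ≤ -1 := by exact_mod_cast (by omega : j ≤ -1)
      have hj'R : (0 : ℝ) ≤ (j' : ℝ) := by exact_mod_cast hj'
      have e1 : |(j : ℝ) + μ| = -((j : ℝ) + μ) := abs_of_neg (by linarith)
      have e2 : |(j' : ℝ) + μ| = (j' : ℝ) + μ := abs_of_pos (by linarith)
      rw [e1, e2] at hk
      have hk' : σ' * Real.sqrt ((j' : ℝ) + μ) - σ * Real.sqrt (-((j : ℝ) + μ))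
          = (j' : ℝ) - (j : ℝ) := by linarith
      exact aux_mixed μ hμ0 hμhalf j' j hj' (by omega) σ' σ hσ' hσ hk'
    · -- both ≤ -1
      have hjR : (j : ℝ) ≤ -1 := by exact_mod_cast (by omega : j ≤ -1)
      have hj'R : (j' : ℝ) ≤ -1 := by exact_mod_cast (by omega : j' ≤ -1)
      have e1 : |(j : ℝ) + μ| = -((j : ℝ) + μ) := abs_of_neg (by linarith)
      have e2 : |(j' : ℝ) + μ| = -((j' : ℝ) + μ) := abs_of_neg (by linarith)
      rw [e1, e2] at hk
      set a := Real.sqrt (-((j : ℝ) + μ)) with hadef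
      set b := Real.sqrt (-((j' : ℝ) + μ)) with hbdef
      have ha2 : a ^ 2 = -((j : ℝ) + μ) := Real.sq_sqrt (by linarith)
      have hb2 : b ^ 2 = -((j' : ℝ) + μ) := Real.sq_sqrt (by linarith)
      clear_value a b
      have hprod : ((j : ℝ) - j') * (σ * a + σ' * b) = ((j : ℝ) - j') * (-1) := by
        calc ((j : ℝ) - j') * (σ * a + σ' * b)
            = (σ * a - σ' * b) * (σ * a + σ' * b) := by rw [hk]
          _ = (σ * a) ^ 2 - (σ' * b) ^ 2 := by ring
          _ = -((j : ℝ) + μ) - -((j' : ℝ) + μ) := by rw [hsqa, hsqb, ha2, hb2]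
          _ = ((j : ℝ) - j') * (-1) := by ring
      have hs : σ * a + σ' * b = -1 := mul_left_cancel₀ hkne hprod
      have h2a : 2 * (σ * a) = (j : ℝ) - j' - 1 := by linarith
      have heq4 : 4 * (-((j : ℝ) + μ)) = ((j : ℝ) - j' - 1) ^ 2 := by
        calc 4 * (-((j : ℝ) + μ)) = 4 * (σ * a) ^ 2 := by rw [hsqa, ha2]
          _ = (2 * (σ * a)) ^ 2 := by ring
          _ = ((j : ℝ) - j' - 1) ^ 2 := by rw [h2a]
      have hn : ((-(j - j' - 1) ^ 2 - 4 * j : ℤ) : ℝ) = 4 * μ := by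
        push_cast; linear_combination heq4
      have hn1 : (-(j - j' - 1) ^ 2 - 4 * j : ℤ) = 1 := by
        have h1 : (0 : ℝ) < ((-(j - j' - 1) ^ 2 - 4 * j : ℤ) : ℝ) := by rw [hn]; linarith
        have h2 : ((-(j - j' - 1) ^ 2 - 4 * j : ℤ) : ℝ) < 2 := by rw [hn]; linarith
        have h1' : 0 < -(j - j' - 1) ^ 2 - 4 * j := by exact_mod_cast h1
        have h2' : -(j - j' - 1) ^ 2 - 4 * j < 2 := by exact_mod_cast h2
        omega
      rw [hn1] at hn
      push_cast at hn
      exact hμquarter (by linarith)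
end

section
/- Let (j,σ), (j',σ') ∈ ℤ × {−1,+1} with (j,σ) ≠ (j',σ'). Then ω_j^σ(1/4) = ω_{j'}^{σ'}(1/4) if and only if there exists an integer n ≥ 1 such that {(j,σ), (j',σ')} = {(n²−n, −1), (n²+n, +1)}; in this case the common value is n² − 1/4 = ((2n)² − 1)/4. In particular, every multiple value of the map (j,σ) ↦ ω_j^σ(1/4) on ℤ × {−1,+1} is attained by exactly two pairs (it is a double, not higher, coincidence). -/
lemma sqrt_abs_eq (j : ℤ) :
    Real.sqrt |(j : ℝ) + 1/4| = Real.sqrt ((|4*j+1| : ℤ) : ℝ) / 2 := by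
  have h : |(j:ℝ) + 1/4| = ((|4*j+1| : ℤ) : ℝ) / 4 := by
    push_cast
    rw [show (j:ℝ) + 1/4 = (4*(j:ℝ)+1)/4 by ring, abs_div]
    norm_num
  rw [h, Real.sqrt_div' _ (by norm_num : (0:ℝ) ≤ 4),
    show (4:ℝ) = 2^2 by norm_num, Real.sqrt_sq (by norm_num : (0:ℝ) ≤ 2)]

lemma omg_eval (j : ℤ) (σ : ℝ) :
    omg (1/4) j σ = (j:ℝ) + 1/4 - σ * (Real.sqrt ((|4*j+1| : ℤ) : ℝ) / 2) := by
  rw [omg, sqrt_abs_eq]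

lemma omg_neg_val (n : ℤ) (hn : 1 ≤ n) :
    omg (1/4) (n^2 - n) (-1) = (n:ℝ)^2 - 1/4 := by
  have hn' : (1:ℝ) ≤ (n:ℝ) := by exact_mod_cast hn
  have h1 : ((n^2 - n : ℤ) : ℝ) + 1/4 = ((n:ℝ) - 1/2)^2 := by push_cast; ring
  rw [omg, h1, abs_of_nonneg (sq_nonneg _), Real.sqrt_sq (by linarith)]
  ring

lemma omg_pos_val (n : ℤ) (hn : 1 ≤ n) :
    omg (1/4) (n^2 + n) 1 = (n:ℝ)^2 - 1/4 := by
  have hn' : (1:ℝ) ≤ (n:ℝ) := by exact_mod_cast hn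
  have h1 : ((n^2 + n : ℤ) : ℝ) + 1/4 = ((n:ℝ) + 1/2)^2 := by push_cast; ring
  rw [omg, h1, abs_of_nonneg (sq_nonneg _), Real.sqrt_sq (by linarith)]
  ring

lemma core (a b C : ℤ) (ha : 0 ≤ a) (hb : 0 ≤ b) (hC : C ≠ 0)
    (ε ε' : ℝ) (hε : ε * ε = 1) (hε' : ε' * ε' = 1)
    (h : ε * Real.sqrt a - ε' * Real.sqrt b = (C : ℝ)) :
    ∃ p q : ℤ, 0 ≤ p ∧ 0 ≤ q ∧ p ^ 2 = a ∧ q ^ 2 = b := by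
  set s : ℝ := Real.sqrt a with hs
  set t : ℝ := Real.sqrt b with ht
  have sa : s * s = (a : ℝ) := Real.mul_self_sqrt (by exact_mod_cast ha)
  have sb : t * t = (b : ℝ) := Real.mul_self_sqrt (by exact_mod_cast hb)
  have h2 : 2 * (C:ℝ) * (ε' * t) = (a : ℝ) - b - C^2 := by
    linear_combination (-(ε*s + ε'*t + (C:ℝ))) * h + (s*s)*hε + sa - (t*t)*hε' - sb
  have h3 : ε' * t = ε * s - (C:ℝ) := by linarith
  have h4 : 2 * (C:ℝ) * (ε * s) = (a : ℝ) + C^2 - b := by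
    linear_combination (ε'*t + ε*s - (C:ℝ)) * h3 - (t*t) * hε' - sb + (s*s) * hε + sa
  have hb2 : ((4 * C^2 * b : ℤ) : ℝ) = (((a - b - C^2)^2 : ℤ) : ℝ) := by
    push_cast
    linear_combination (2*(C:ℝ)*(ε'*t) + ((a:ℝ) - b - (C:ℝ)^2)) * h2
      - 4*(C:ℝ)^2*(t*t)*hε' - 4*(C:ℝ)^2*sb
  have ha2 : ((4 * C^2 * a : ℤ) : ℝ) = (((a + C^2 - b)^2 : ℤ) : ℝ) := by
    push_cast
    linear_combination (2*(C:ℝ)*(ε*s) + ((a:ℝ) + (C:ℝ)^2 - b)) * h4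
      - 4*(C:ℝ)^2*(s*s)*hε - 4*(C:ℝ)^2*sa
  have hb3 : 4 * C^2 * b = (a - b - C^2)^2 := by exact_mod_cast hb2
  have ha3 : 4 * C^2 * a = (a + C^2 - b)^2 := by exact_mod_cast ha2
  have hd : (2*C)^2 ∣ (a - b - C^2)^2 := ⟨b, by linarith [hb3]⟩
  obtain ⟨q, hq⟩ := (Int.pow_dvd_pow_iff (by norm_num : 2 ≠ 0)).mp hd
  have hbq : b = q^2 := by
    have h2C : (2*C) ≠ 0 := by omega
    refine mul_left_cancel₀ (pow_ne_zero 2 h2C) ?_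
    linear_combination hb3 + (a - b - C^2 + 2*C*q) * hq
  have he : (2*C)^2 ∣ (a + C^2 - b)^2 := ⟨a, by linarith [ha3]⟩
  obtain ⟨p, hp⟩ := (Int.pow_dvd_pow_iff (by norm_num : 2 ≠ 0)).mp he
  have hap : a = p^2 := by
    have h2C : (2*C) ≠ 0 := by omega
    refine mul_left_cancel₀ (pow_ne_zero 2 h2C) ?_
    linear_combination ha3 + (a + C^2 - b + 2*C*p) * hp
  exact ⟨|p|, |q|, abs_nonneg _, abs_nonneg _, by rw [sq_abs]; omega, by rw [sq_abs]; omega⟩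

lemma sq_abs_form (j p : ℤ) (h : p^2 = |4*j+1|) :
    p^2 = 4*j+1 ∧ ∃ k : ℤ, p = 2*k+1 := by
  rcases Int.even_or_odd p with ⟨k, hk⟩ | ⟨k, hk⟩
  · exfalso
    have h4 : p^2 = 4*(k*k) := by rw [hk]; ring
    obtain ⟨m, hm⟩ : ∃ m, k*k = m := ⟨_, rfl⟩
    rw [hm] at h4
    rcases abs_cases (4*j+1) with ⟨h1, _⟩ | ⟨h1, _⟩ <;> rw [h1] at h <;> omega
  · have h4 : p^2 = 4*(k*k+k) + 1 := by rw [hk]; ring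
    obtain ⟨m, hm⟩ : ∃ m, k*k+k = m := ⟨_, rfl⟩
    rw [hm] at h4
    refine ⟨?_, k, hk⟩
    rcases abs_cases (4*j+1) with ⟨h1, _⟩ | ⟨h1, _⟩ <;> rw [h1] at h <;> omega

lemma forward (j j' : ℤ) (σ σ' : ℝ) (hσ : σ = -1 ∨ σ = 1) (hσ' : σ' = -1 ∨ σ' = 1)
    (hne : (j, σ) ≠ (j', σ')) (heq : omg (1/4) j σ = omg (1/4) j' σ') :
    ∃ n : ℤ, 1 ≤ n ∧
      ((j = n ^ 2 - n ∧ σ = -1 ∧ j' = n ^ 2 + n ∧ σ' = 1) ∨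
       (j = n ^ 2 + n ∧ σ = 1 ∧ j' = n ^ 2 - n ∧ σ' = -1)) ∧
      omg (1/4) j σ = (n : ℝ) ^ 2 - 1 / 4 := by
  have hvalj : omg (1/4) j σ = omg (1/4) j σ := rfl
  rw [omg_eval, omg_eval] at heq
  have hε : σ * σ = 1 := by rcases hσ with rfl | rfl <;> norm_num
  have hε' : σ' * σ' = 1 := by rcases hσ' with rfl | rfl <;> norm_num
  have ha1 : (0:ℤ) < |4*j+1| := by rcases abs_cases (4*j+1) with ⟨h1,_⟩|⟨h1,_⟩ <;> omega
  have hb1 : (0:ℤ) < |4*j'+1| := by rcases abs_cases (4*j'+1) with ⟨h1,_⟩|⟨h1,_⟩ <;> omega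
  have hjj' : j ≠ j' := by
    rintro rfl
    have hS : 0 < Real.sqrt ((|4*j+1| : ℤ) : ℝ) :=
      Real.sqrt_pos.mpr (by exact_mod_cast ha1)
    have h0 : (σ - σ') * (Real.sqrt ((|4*j+1| : ℤ) : ℝ) / 2) = 0 := by
      linear_combination -heq
    rcases mul_eq_zero.mp h0 with h | h
    · exact hne (by rw [show σ = σ' by linarith])
    · linarith
  have hC : (2*(j-j') : ℤ) ≠ 0 := by omega
  have E : σ * Real.sqrt ((|4*j+1| : ℤ) : ℝ) - σ' * Real.sqrt ((|4*j'+1| : ℤ) : ℝ)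
      = ((2*(j-j') : ℤ) : ℝ) := by
    rw [show ((2*(j-j') : ℤ) : ℝ) = 2*(j:ℝ) - 2*(j':ℝ) by push_cast; ring]
    linear_combination (-2 : ℝ) * heq
  obtain ⟨p, q, hp0, hq0, hpa, hqb⟩ :=
    core _ _ _ (le_of_lt ha1) (le_of_lt hb1) hC σ σ' hε hε' E
  have hsp : Real.sqrt ((|4*j+1| : ℤ) : ℝ) = (p:ℝ) := by
    rw [← hpa]; push_cast; exact Real.sqrt_sq (by exact_mod_cast hp0)
  have hsq : Real.sqrt ((|4*j'+1| : ℤ) : ℝ) = (q:ℝ) := by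
    rw [← hqb]; push_cast; exact Real.sqrt_sq (by exact_mod_cast hq0)
  rw [hsp, hsq] at E
  push_cast at E
  obtain ⟨hpj, k, hk⟩ := sq_abs_form j p hpa
  obtain ⟨hqj, l, hl⟩ := sq_abs_form j' q hqb
  rcases hσ with rfl | rfl <;> rcases hσ' with rfl | rfl
  · -- σ = -1, σ' = -1 : contradiction
    exfalso
    have hE : -(p:ℝ) + q = 2*j - 2*j' := by linarith [E]
    have hE' : -p + q = 2*j - 2*j' := by exact_mod_cast hE
    have hfac : (p - q) * (p + q + 2) = 0 := by
      linear_combination hpj - hqj - 2*hE'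
    have hpq : p = q := by rcases mul_eq_zero.mp hfac with h | h <;> omega
    have : (4*j+1 : ℤ) = 4*j'+1 := by rw [← hpj, ← hqj, hpq]
    exact hjj' (by omega)
  · -- σ = -1, σ' = 1
    have hE : -(p:ℝ) - q = 2*j - 2*j' := by linarith [E]
    have hE' : -p - q = 2*j - 2*j' := by exact_mod_cast hE
    have hfac : (p + q) * (p - q + 2) = 0 := by
      linear_combination hpj - hqj - 2*hE'
    have hq2 : q = p + 2 := by rcases mul_eq_zero.mp hfac with h | h <;> omega
    have hq3 : q = 2*(k+1)+1 := by omega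
    have hj : j = (k+1)^2 - (k+1) := by
      refine mul_left_cancel₀ (by norm_num : (4:ℤ) ≠ 0) ?_
      linear_combination (p + 2*k + 1) * hk - hpj
    have hj' : j' = (k+1)^2 + (k+1) := by
      refine mul_left_cancel₀ (by norm_num : (4:ℤ) ≠ 0) ?_
      linear_combination (q + 2*k + 3) * hq3 - hqj
    refine ⟨k+1, by omega, Or.inl ⟨hj, rfl, hj', rfl⟩, ?_⟩
    rw [hj]; exact omg_neg_val (k+1) (by omega)
  · -- σ = 1, σ' = -1
    have hE : (p:ℝ) + q = 2*j - 2*j' := by linarith [E]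
    have hE' : p + q = 2*j - 2*j' := by exact_mod_cast hE
    have hfac : (p + q) * (p - q - 2) = 0 := by
      linear_combination hpj - hqj - 2*hE'
    have hp2 : p = q + 2 := by rcases mul_eq_zero.mp hfac with h | h <;> omega
    have hp3 : p = 2*(l+1)+1 := by omega
    have hj : j = (l+1)^2 + (l+1) := by
      refine mul_left_cancel₀ (by norm_num : (4:ℤ) ≠ 0) ?_
      linear_combination (p + 2*l + 3) * hp3 - hpj
    have hj' : j' = (l+1)^2 - (l+1) := by
      refine mul_left_cancel₀ (by norm_num : (4:ℤ) ≠ 0) ?_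
      linear_combination (q + 2*l + 1) * hl - hqj
    refine ⟨l+1, by omega, Or.inr ⟨hj, rfl, hj', rfl⟩, ?_⟩
    rw [hj]; exact omg_pos_val (l+1) (by omega)
  · -- σ = 1, σ' = 1 : contradiction
    exfalso
    have hE : (p:ℝ) - q = 2*j - 2*j' := by linarith [E]
    have hE' : p - q = 2*j - 2*j' := by exact_mod_cast hE
    have hfac : (p - q) * (p + q - 2) = 0 := by
      linear_combination hpj - hqj - 2*hE'
    have hpq : p = q := by
      rcases mul_eq_zero.mp hfac with h | h
      · omega
      · omega
    have : (4*j+1 : ℤ) = 4*j'+1 := by rw [← hpj, ← hqj, hpq]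
    exact hjj' (by omega)

theorem stmt14 (j j' : ℤ) (σ σ' : ℝ) (hσ : σ = -1 ∨ σ = 1) (hσ' : σ' = -1 ∨ σ' = 1)
    (hne : (j, σ) ≠ (j', σ')) :
    -- the coincidence happens exactly for the pairs {(n²-n, -1), (n²+n, +1)}, n ≥ 1,
    -- with common value n² - 1/4
    (omg (1/4) j σ = omg (1/4) j' σ' ↔
      ∃ n : ℤ, 1 ≤ n ∧
        ((j = n ^ 2 - n ∧ σ = -1 ∧ j' = n ^ 2 + n ∧ σ' = 1) ∨
         (j = n ^ 2 + n ∧ σ = 1 ∧ j' = n ^ 2 - n ∧ σ' = -1)) ∧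
        omg (1/4) j σ = (n : ℝ) ^ 2 - 1 / 4)
    -- double, not higher coincidence: only the two pairs (j,σ), (j',σ') attain the common value
    ∧ (omg (1/4) j σ = omg (1/4) j' σ' →
        ∀ (j'' : ℤ) (σ'' : ℝ), (σ'' = -1 ∨ σ'' = 1) →
          omg (1/4) j'' σ'' = omg (1/4) j σ →
          ((j'' = j ∧ σ'' = σ) ∨ (j'' = j' ∧ σ'' = σ'))) := by

  constructor
  · constructor
    · exact forward j j' σ σ' hσ hσ' hne
    · rintro ⟨n, hn, hd, hv⟩
      rcases hd with ⟨rfl, rfl, rfl, rfl⟩ | ⟨rfl, rfl, rfl, rfl⟩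
      · rw [omg_neg_val n hn, omg_pos_val n hn]
      · rw [omg_pos_val n hn, omg_neg_val n hn]
  · intro heq j'' σ'' hσ'' heq''
    by_cases hcase : (j'', σ'') = (j, σ)
    · simp only [Prod.mk.injEq] at hcase
      exact Or.inl hcase
    · obtain ⟨n, hn, hd, hv⟩ := forward j j' σ σ' hσ hσ' hne heq
      obtain ⟨m, hm, hd', hv'⟩ := forward j'' j σ'' σ hσ'' hσ hcase heq''
      have hv'' : omg (1/4) j'' σ'' = (n:ℝ)^2 - 1/4 := heq''.trans hv
      have hmn : (m:ℝ)^2 = (n:ℝ)^2 := by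
        have := hv'.symm.trans hv''
        linarith
      have hmn2 : m^2 = n^2 := by exact_mod_cast hmn
      have hmn' : m = n := by
        have h3 : m ≤ n := by nlinarith
        have h4 : n ≤ m := by nlinarith
        omega
      subst hmn'
      rcases hd with ⟨hj1, hs1, hj2, hs2⟩ | ⟨hj1, hs1, hj2, hs2⟩ <;>
        rcases hd' with ⟨ha1, hb1, ha2, hb2⟩ | ⟨ha1, hb1, ha2, hb2⟩
      · exfalso; rw [hs1] at hb2; norm_num at hb2
      · exact Or.inr ⟨by rw [ha1, hj2], by rw [hb1, hs2]⟩
      · exact Or.inr ⟨by rw [ha1, hj2], by rw [hb1, hs2]⟩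
      · exfalso; rw [hs1] at hb2; norm_num at hb2
end

section
/- Let (j,σ), (j',σ') ∈ ℤ × {−1,+1} with (j,σ) ≠ (j',σ') and suppose ω_j^σ(0) = ω_{j'}^{σ'}(0) ≠ 0. Then there exists an integer n ≥ 1 such that either {(j,σ), (j',σ')} = {(n², −1), ((n+1)², +1)}, in which case the common value is n² + n = ((2n+1)² − 1)/4, or {(j,σ), (j',σ')} = {(−n², +1), (−(n+1)², −1)}, in which case the common value is −(n² + n). Conversely, each of these pairs does satisfy ω_j^σ(0) = ω_{j'}^{σ'}(0). In particular every nonzero multiple value of the map (j,σ) ↦ ω_j^σ(0) is attained by exactly two pairs. -/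
lemma omg0 (j : ℤ) (σ : ℝ) : omg 0 j σ = (j:ℝ) - σ * Real.sqrt (((|j| : ℤ)) : ℝ) := by
  simp [omg, Int.cast_abs]

lemma omg_sq (m : ℤ) (hm : 0 ≤ m) (σ : ℝ) : omg 0 (m^2) σ = (m:ℝ)^2 - σ * m := by
  rw [omg0]
  have h1 : (((|m ^ 2| : ℤ)) : ℝ) = (m:ℝ)^2 := by
    rw [abs_of_nonneg (sq_nonneg m)]; push_cast; ring
  rw [h1, Real.sqrt_sq (by exact_mod_cast hm)]; push_cast; ring

lemma omg_negsq (m : ℤ) (hm : 0 ≤ m) (σ : ℝ) : omg 0 (-m^2) σ = -(m:ℝ)^2 - σ * m := by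
  rw [omg0]
  have h1 : (((|(-m ^ 2)| : ℤ)) : ℝ) = (m:ℝ)^2 := by
    rw [abs_neg, abs_of_nonneg (sq_nonneg m)]; push_cast; ring
  rw [h1, Real.sqrt_sq (by exact_mod_cast hm)]; push_cast; ring

lemma step (d s t e e' : ℝ) (he2 : e^2 = 1) (he'2 : e'^2 = 1) (h : d = e*s - e'*t) :
    2*d*(e'*t) = s^2 - t^2 - d^2 := by
  linear_combination (d + e*s + e'*t) * h + s^2 * he2 - t^2 * he'2

lemma step2 (d s t e e' : ℝ) (he2 : e^2 = 1) (he'2 : e'^2 = 1) (h : d = e*s - e'*t) :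
    2*d*(e*s) = s^2 - t^2 + d^2 := by
  linear_combination (e*s + e'*t - d) * h + s^2 * he2 - t^2 * he'2

lemma exists_int_sqrt (k : ℤ) (hk : 0 ≤ k) (h : ∃ q : ℚ, (q:ℝ) = Real.sqrt (k:ℝ)) :
    ∃ a : ℤ, 0 ≤ a ∧ a^2 = k ∧ Real.sqrt (k:ℝ) = (a:ℝ) := by
  by_cases hint : ∃ y : ℤ, Real.sqrt ((k:ℤ):ℝ) = (y:ℝ)
  · obtain ⟨y, hy⟩ := hint
    have hy0 : (0:ℝ) ≤ (y:ℝ) := hy ▸ Real.sqrt_nonneg _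
    have hy2 : (y:ℝ)^2 = (k:ℝ) := by rw [← hy]; exact Real.sq_sqrt (by exact_mod_cast hk)
    exact ⟨y, by exact_mod_cast hy0, by exact_mod_cast hy2, hy⟩
  · exfalso
    have hirr := irrational_nrt_of_notint_nrt (x := Real.sqrt ((k:ℤ):ℝ)) 2 k
      (by rw [Real.sq_sqrt (by exact_mod_cast hk : (0:ℝ) ≤ ((k:ℤ):ℝ))]) hint (by norm_num)
    obtain ⟨q, hq⟩ := h
    exact hirr ⟨q, hq⟩

lemma sqrt_int_of (k c d : ℤ) (hk : 0 ≤ k) (e : ℝ) (he : e = -1 ∨ e = 1)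
    (hd : d ≠ 0) (h : (d:ℝ) * (e * Real.sqrt (k:ℝ)) = (c:ℝ)) :
    ∃ a : ℤ, 0 ≤ a ∧ a^2 = k ∧ Real.sqrt (k:ℝ) = (a:ℝ) := by
  apply exists_int_sqrt k hk
  have hdR : ((d:ℚ):ℝ) ≠ 0 := by exact_mod_cast hd
  rcases he with rfl | rfl
  · refine ⟨-((c:ℚ)/(d:ℚ)), ?_⟩
    push_cast
    field_simp
    linarith
  · refine ⟨(c:ℚ)/(d:ℚ), ?_⟩
    push_cast
    field_simp
    linarith

lemma get_ab (j j' : ℤ) (σ σ' : ℝ) (hσ : σ = -1 ∨ σ = 1) (hσ' : σ' = -1 ∨ σ' = 1)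
    (hjj : j ≠ j')
    (heq : (j:ℝ) - σ * Real.sqrt (((|j| : ℤ)) : ℝ) = (j':ℝ) - σ' * Real.sqrt (((|j'| : ℤ)) : ℝ)) :
    ∃ a b : ℤ, 0 ≤ a ∧ 0 ≤ b ∧ a^2 = |j| ∧ b^2 = |j'| ∧
      Real.sqrt (((|j| : ℤ)) : ℝ) = (a:ℝ) ∧ Real.sqrt (((|j'| : ℤ)) : ℝ) = (b:ℝ) := by
  set s := Real.sqrt (((|j| : ℤ)) : ℝ) with hs
  set t := Real.sqrt (((|j'| : ℤ)) : ℝ) with ht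
  have hσ2 : σ^2 = 1 := by rcases hσ with rfl | rfl <;> norm_num
  have hσ'2 : σ'^2 = 1 := by rcases hσ' with rfl | rfl <;> norm_num
  have hs2 : s^2 = ((|j| : ℤ) : ℝ) := Real.sq_sqrt (by exact_mod_cast abs_nonneg j)
  have ht2 : t^2 = ((|j'| : ℤ) : ℝ) := Real.sq_sqrt (by exact_mod_cast abs_nonneg j')
  have hd : (j:ℝ) - (j':ℝ) = σ * s - σ' * t := by linarith
  have hD : (2*(j - j') : ℤ) ≠ 0 := by omega
  have h2 : ((2*(j - j') : ℤ) : ℝ) * (σ' * t) = ((|j| - |j'| - (j - j')^2 : ℤ) : ℝ) := by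
    have := step ((j:ℝ) - (j':ℝ)) s t σ σ' hσ2 hσ'2 hd
    push_cast [Int.cast_abs] at hs2 ht2 ⊢
    nlinarith [this]
  have h2' : ((2*(j - j') : ℤ) : ℝ) * (σ * s) = ((|j| - |j'| + (j - j')^2 : ℤ) : ℝ) := by
    have := step2 ((j:ℝ) - (j':ℝ)) s t σ σ' hσ2 hσ'2 hd
    push_cast [Int.cast_abs] at hs2 ht2 ⊢
    nlinarith [this]
  obtain ⟨b, hb0, hb2, hbt⟩ := sqrt_int_of (|j'|) _ _ (abs_nonneg j') σ' hσ' hD h2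
  obtain ⟨a, ha0, ha2, has⟩ := sqrt_int_of (|j|) _ _ (abs_nonneg j) σ hσ hD h2'
  exact ⟨a, b, ha0, hb0, ha2, hb2, has, hbt⟩

lemma sq_ge (a : ℤ) (h : 0 ≤ a) : a ≤ a^2 := by
  rcases h.eq_or_lt with h1 | h1
  · simp [← h1]
  · nlinarith

lemma solve_pos (x y : ℤ) (hx : 0 ≤ x) (hy : 0 ≤ y) (h : x^2 + x = y^2 - y)
    (hnz : x^2 + x ≠ 0) : y = x + 1 ∧ 1 ≤ x := by
  have h0 : (y - x - 1) * (y + x) = 0 := by linear_combination -h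
  rcases mul_eq_zero.mp h0 with h1 | h1
  · have hy1 : y = x + 1 := by omega
    refine ⟨hy1, ?_⟩
    by_contra hlt
    have hx0 : x = 0 := by omega
    subst hx0
    norm_num at hnz
  · exfalso
    have hx0 : x = 0 := by omega
    subst hx0
    norm_num at hnz

lemma core_s15 (j j' a b e e' : ℤ) (ha : 0 ≤ a) (hb : 0 ≤ b)
    (he : e = -1 ∨ e = 1) (he' : e' = -1 ∨ e' = 1)
    (hja : j = a^2 ∨ j = -a^2) (hjb : j' = b^2 ∨ j' = -b^2)
    (heq : j - e*a = j' - e'*b) (hnz : j - e*a ≠ 0)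
    (hne : j ≠ j' ∨ e ≠ e') :
    ∃ n : ℤ, 1 ≤ n ∧
      (((j = n^2 ∧ e = -1 ∧ j' = (n+1)^2 ∧ e' = 1) ∨
        (j = (n+1)^2 ∧ e = 1 ∧ j' = n^2 ∧ e' = -1)) ∨
       ((j = -n^2 ∧ e = 1 ∧ j' = -(n+1)^2 ∧ e' = -1) ∨
        (j = -(n+1)^2 ∧ e = -1 ∧ j' = -n^2 ∧ e' = 1))) := by
  rcases hja with rfl | rfl <;> rcases hjb with rfl | rfl <;>
    rcases he with rfl | rfl <;> rcases he' with rfl | rfl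
  · exfalso
    have h0 : (a - b) * (a + b + 1) = 0 := by linear_combination heq
    rcases mul_eq_zero.mp h0 with h1 | h1
    · have : a = b := by omega
      subst this
      rcases hne with h | h
      · exact h rfl
      · exact h rfl
    · omega
  · obtain ⟨hb1, hx1⟩ := solve_pos a b ha hb (by linarith) (fun h => hnz (by linarith))
    exact ⟨a, hx1, Or.inl (Or.inl ⟨rfl, rfl, by rw [hb1], rfl⟩)⟩
  · obtain ⟨ha1, hx1⟩ := solve_pos b a hb ha (by linarith) (fun h => hnz (by linarith))
    exact ⟨b, hx1, Or.inl (Or.inr ⟨by rw [ha1], rfl, rfl, rfl⟩)⟩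
  · exfalso
    have h0 : (a - b) * (a + b - 1) = 0 := by linear_combination heq
    rcases mul_eq_zero.mp h0 with h1 | h1
    · have : a = b := by omega
      subst this
      rcases hne with h | h
      · exact h rfl
      · exact h rfl
    · have : (a = 0 ∧ b = 1) ∨ (a = 1 ∧ b = 0) := by omega
      rcases this with ⟨rfl, rfl⟩ | ⟨rfl, rfl⟩ <;> norm_num at hnz
  · exact absurd (by nlinarith [sq_ge a ha, sq_ge b hb] : a^2 - (-1)*a = 0) hnz
  · exact absurd (by nlinarith [sq_ge a ha, sq_ge b hb] : a^2 - (-1)*a = 0) hnz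
  · exact absurd (by nlinarith [sq_ge a ha, sq_ge b hb] : a^2 - 1*a = 0) hnz
  · exact absurd (by nlinarith [sq_ge a ha, sq_ge b hb] : a^2 - 1*a = 0) hnz
  · exact absurd (by nlinarith [sq_ge a ha, sq_ge b hb] : -a^2 - (-1)*a = 0) hnz
  · exact absurd (by nlinarith [sq_ge a ha, sq_ge b hb] : -a^2 - (-1)*a = 0) hnz
  · exact absurd (by nlinarith [sq_ge a ha, sq_ge b hb] : -a^2 - 1*a = 0) hnz
  · exact absurd (by nlinarith [sq_ge a ha, sq_ge b hb] : -a^2 - 1*a = 0) hnz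
  · exfalso
    have h0 : (a - b) * (a + b - 1) = 0 := by linear_combination -heq
    rcases mul_eq_zero.mp h0 with h1 | h1
    · have : a = b := by omega
      subst this
      rcases hne with h | h
      · exact h rfl
      · exact h rfl
    · have : (a = 0 ∧ b = 1) ∨ (a = 1 ∧ b = 0) := by omega
      rcases this with ⟨rfl, rfl⟩ | ⟨rfl, rfl⟩ <;> norm_num at hnz
  · obtain ⟨ha1, hx1⟩ := solve_pos b a hb ha (by linarith) (fun h => hnz (by linarith))
    exact ⟨b, hx1, Or.inr (Or.inr ⟨by rw [ha1], rfl, rfl, rfl⟩)⟩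
  · obtain ⟨hb1, hx1⟩ := solve_pos a b ha hb (by linarith) (fun h => hnz (by linarith))
    exact ⟨a, hx1, Or.inr (Or.inl ⟨rfl, rfl, by rw [hb1], rfl⟩)⟩
  · exfalso
    have h0 : (a - b) * (a + b + 1) = 0 := by linear_combination -heq
    rcases mul_eq_zero.mp h0 with h1 | h1
    · have : a = b := by omega
      subst this
      rcases hne with h | h
      · exact h rfl
      · exact h rfl
    · omega

lemma key (j j' : ℤ) (σ σ' : ℝ) (hσ : σ = -1 ∨ σ = 1) (hσ' : σ' = -1 ∨ σ' = 1)
    (hne : (j, σ) ≠ (j', σ')) (heq : omg 0 j σ = omg 0 j' σ') (hnz : omg 0 j σ ≠ 0) :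
    ∃ n : ℤ, 1 ≤ n ∧
      ((((j = n ^ 2 ∧ σ = -1 ∧ j' = (n + 1) ^ 2 ∧ σ' = 1) ∨
         (j = (n + 1) ^ 2 ∧ σ = 1 ∧ j' = n ^ 2 ∧ σ' = -1)) ∧
          omg 0 j σ = (n : ℝ) ^ 2 + (n : ℝ)) ∨
       (((j = -n ^ 2 ∧ σ = 1 ∧ j' = -(n + 1) ^ 2 ∧ σ' = -1) ∨
         (j = -(n + 1) ^ 2 ∧ σ = -1 ∧ j' = -n ^ 2 ∧ σ' = 1)) ∧
          omg 0 j σ = -((n : ℝ) ^ 2 + (n : ℝ)))) := by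
  simp only [omg0] at heq hnz
  have hjj : j ≠ j' := by
    intro h
    subst h
    have hσσ : σ ≠ σ' := by simpa using hne
    have hss : σ * Real.sqrt (((|j| : ℤ)) : ℝ) = σ' * Real.sqrt (((|j| : ℤ)) : ℝ) := by
      linarith
    have hs0 : Real.sqrt (((|j| : ℤ)) : ℝ) = 0 := by
      rcases hσ with rfl | rfl <;> rcases hσ' with rfl | rfl <;>
        first
          | exact absurd rfl hσσ
          | linarith
    have hj0 : j = 0 := by
      have h2 : ((|j| : ℤ) : ℝ) = 0 := by
        rw [← Real.sq_sqrt (show (0:ℝ) ≤ ((|j| : ℤ) : ℝ) by exact_mod_cast abs_nonneg j), hs0]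
        norm_num
      have h3 : (|j| : ℤ) = 0 := by exact_mod_cast h2
      exact abs_eq_zero.mp h3
    apply hnz
    rw [hs0, hj0]
    norm_num
  obtain ⟨a, b, ha0, hb0, ha2, hb2, has, hbt⟩ := get_ab j j' σ σ' hσ hσ' hjj heq
  rw [has, hbt] at heq
  rw [has] at hnz
  have hja : j = a^2 ∨ j = -a^2 := by
    rcases abs_cases j with ⟨h1, _⟩ | ⟨h1, _⟩
    · left; rw [h1] at ha2; exact ha2.symm
    · right; rw [h1] at ha2; linarith
  have hjb : j' = b^2 ∨ j' = -b^2 := by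
    rcases abs_cases j' with ⟨h1, _⟩ | ⟨h1, _⟩
    · left; rw [h1] at hb2; exact hb2.symm
    · right; rw [h1] at hb2; linarith
  rcases hσ with rfl | rfl <;> rcases hσ' with rfl | rfl
  · -- σ = -1, σ' = -1
    have heqZ : j - (-1)*a = j' - (-1)*b := by
      have : ((j - (-1)*a : ℤ) : ℝ) = ((j' - (-1)*b : ℤ) : ℝ) := by push_cast; linarith
      exact_mod_cast this
    have hnzZ : j - (-1)*a ≠ 0 := by
      intro h
      apply hnz
      have : ((j - (-1)*a : ℤ) : ℝ) = 0 := by exact_mod_cast h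
      push_cast at this
      linarith
    obtain ⟨n, hn, hcl⟩ := core_s15 j j' a b (-1) (-1) ha0 hb0 (Or.inl rfl) (Or.inl rfl)
      hja hjb heqZ hnzZ (Or.inl hjj)
    rcases hcl with (⟨h1, h2, h3, h4⟩ | ⟨h1, h2, h3, h4⟩) | (⟨h1, h2, h3, h4⟩ | ⟨h1, h2, h3, h4⟩) <;>
      first
        | (exfalso; omega)
  · -- σ = -1, σ' = 1
    have heqZ : j - (-1)*a = j' - 1*b := by
      have : ((j - (-1)*a : ℤ) : ℝ) = ((j' - 1*b : ℤ) : ℝ) := by push_cast; linarith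
      exact_mod_cast this
    have hnzZ : j - (-1)*a ≠ 0 := by
      intro h
      apply hnz
      have : ((j - (-1)*a : ℤ) : ℝ) = 0 := by exact_mod_cast h
      push_cast at this
      linarith
    obtain ⟨n, hn, hcl⟩ := core_s15 j j' a b (-1) 1 ha0 hb0 (Or.inl rfl) (Or.inr rfl)
      hja hjb heqZ hnzZ (Or.inl hjj)
    refine ⟨n, hn, ?_⟩
    rcases hcl with (⟨h1, h2, h3, h4⟩ | ⟨h1, h2, h3, h4⟩) | (⟨h1, h2, h3, h4⟩ | ⟨h1, h2, h3, h4⟩) <;>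
      first
        | (exfalso; omega)
        | (subst h1; subst h3;
           exact Or.inl ⟨Or.inl ⟨rfl, rfl, rfl, rfl⟩, by rw [omg_sq n (by linarith)]; ring⟩)
        | (subst h1; subst h3;
           exact Or.inr ⟨Or.inr ⟨rfl, rfl, rfl, rfl⟩, by rw [omg_negsq (n+1) (by linarith)]; push_cast; ring⟩)
  · -- σ = 1, σ' = -1
    have heqZ : j - 1*a = j' - (-1)*b := by
      have : ((j - 1*a : ℤ) : ℝ) = ((j' - (-1)*b : ℤ) : ℝ) := by push_cast; linarith
      exact_mod_cast this
    have hnzZ : j - 1*a ≠ 0 := by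
      intro h
      apply hnz
      have : ((j - 1*a : ℤ) : ℝ) = 0 := by exact_mod_cast h
      push_cast at this
      linarith
    obtain ⟨n, hn, hcl⟩ := core_s15 j j' a b 1 (-1) ha0 hb0 (Or.inr rfl) (Or.inl rfl)
      hja hjb heqZ hnzZ (Or.inl hjj)
    refine ⟨n, hn, ?_⟩
    rcases hcl with (⟨h1, h2, h3, h4⟩ | ⟨h1, h2, h3, h4⟩) | (⟨h1, h2, h3, h4⟩ | ⟨h1, h2, h3, h4⟩) <;>
      first
        | (exfalso; omega)
        | (subst h1; subst h3;
           exact Or.inl ⟨Or.inr ⟨rfl, rfl, rfl, rfl⟩, by rw [omg_sq (n+1) (by linarith)]; push_cast; ring⟩)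
        | (subst h1; subst h3;
           exact Or.inr ⟨Or.inl ⟨rfl, rfl, rfl, rfl⟩, by rw [omg_negsq n (by linarith)]; ring⟩)
  · -- σ = 1, σ' = 1
    have heqZ : j - 1*a = j' - 1*b := by
      have : ((j - 1*a : ℤ) : ℝ) = ((j' - 1*b : ℤ) : ℝ) := by push_cast; linarith
      exact_mod_cast this
    have hnzZ : j - 1*a ≠ 0 := by
      intro h
      apply hnz
      have : ((j - 1*a : ℤ) : ℝ) = 0 := by exact_mod_cast h
      push_cast at this
      linarith
    obtain ⟨n, hn, hcl⟩ := core_s15 j j' a b 1 1 ha0 hb0 (Or.inr rfl) (Or.inr rfl)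
      hja hjb heqZ hnzZ (Or.inl hjj)
    rcases hcl with (⟨h1, h2, h3, h4⟩ | ⟨h1, h2, h3, h4⟩) | (⟨h1, h2, h3, h4⟩ | ⟨h1, h2, h3, h4⟩) <;>
      first
        | (exfalso; omega)

theorem stmt15 (j j' : ℤ) (σ σ' : ℝ) (hσ : σ = -1 ∨ σ = 1) (hσ' : σ' = -1 ∨ σ' = 1)
    (hne : (j, σ) ≠ (j', σ')) :
    -- classification of the nonzero coincidences at μ = 0
    ((omg 0 j σ = omg 0 j' σ' ∧ omg 0 j σ ≠ 0) →
      ∃ n : ℤ, 1 ≤ n ∧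
        ((((j = n ^ 2 ∧ σ = -1 ∧ j' = (n + 1) ^ 2 ∧ σ' = 1) ∨
           (j = (n + 1) ^ 2 ∧ σ = 1 ∧ j' = n ^ 2 ∧ σ' = -1)) ∧
            omg 0 j σ = (n : ℝ) ^ 2 + (n : ℝ)) ∨
         (((j = -n ^ 2 ∧ σ = 1 ∧ j' = -(n + 1) ^ 2 ∧ σ' = -1) ∨
           (j = -(n + 1) ^ 2 ∧ σ = -1 ∧ j' = -n ^ 2 ∧ σ' = 1)) ∧
            omg 0 j σ = -((n : ℝ) ^ 2 + (n : ℝ)))))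
    -- conversely each such pair is a coincidence
    ∧ (∀ n : ℤ, 1 ≤ n →
        (((j = n ^ 2 ∧ σ = -1 ∧ j' = (n + 1) ^ 2 ∧ σ' = 1) ∨
          (j = (n + 1) ^ 2 ∧ σ = 1 ∧ j' = n ^ 2 ∧ σ' = -1)) ∨
         ((j = -n ^ 2 ∧ σ = 1 ∧ j' = -(n + 1) ^ 2 ∧ σ' = -1) ∨
          (j = -(n + 1) ^ 2 ∧ σ = -1 ∧ j' = -n ^ 2 ∧ σ' = 1))) →
        omg 0 j σ = omg 0 j' σ')
    -- every nonzero multiple value is attained by exactly two pairs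
    ∧ ((omg 0 j σ = omg 0 j' σ' ∧ omg 0 j σ ≠ 0) →
        ∀ (j'' : ℤ) (σ'' : ℝ), (σ'' = -1 ∨ σ'' = 1) →
          omg 0 j'' σ'' = omg 0 j σ →
          ((j'' = j ∧ σ'' = σ) ∨ (j'' = j' ∧ σ'' = σ'))) := by
  refine ⟨?_, ?_, ?_⟩
  · rintro ⟨heq, hnz⟩
    exact key j j' σ σ' hσ hσ' hne heq hnz
  · rintro n hn ((⟨rfl, rfl, rfl, rfl⟩ | ⟨rfl, rfl, rfl, rfl⟩) |
      (⟨rfl, rfl, rfl, rfl⟩ | ⟨rfl, rfl, rfl, rfl⟩))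
    · rw [omg_sq n (by linarith), omg_sq (n+1) (by linarith)]; push_cast; ring
    · rw [omg_sq (n+1) (by linarith), omg_sq n (by linarith)]; push_cast; ring
    · rw [omg_negsq n (by linarith), omg_negsq (n+1) (by linarith)]; push_cast; ring
    · rw [omg_negsq (n+1) (by linarith), omg_negsq n (by linarith)]; push_cast; ring
  · rintro ⟨heq, hnz⟩ j'' σ'' hσ'' h''
    by_cases hc : (j'', σ'') = (j, σ)
    · rw [Prod.ext_iff] at hc
      exact Or.inl hc
    · right
      obtain ⟨n, hn, hC1⟩ := key j j' σ σ' hσ hσ' hne heq hnz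
      obtain ⟨m, hm, hC2⟩ := key j'' j σ'' σ hσ'' hσ hc h'' (by rw [h'']; exact hnz)
      rcases hC1 with ⟨hop1, hv1⟩ | ⟨hop1, hv1⟩ <;> rcases hC2 with ⟨hop2, hv2⟩ | ⟨hop2, hv2⟩
      · -- pos, pos
        have hvv : (m:ℝ)^2 + m = (n:ℝ)^2 + n := by rw [← hv1, ← hv2, h'']
        have hZ : m^2 + m = n^2 + n := by exact_mod_cast hvv
        have hmn : m = n := by
          have h0 : (m - n) * (m + n + 1) = 0 := by linear_combination hZ
          rcases mul_eq_zero.mp h0 with h1 | h1 <;> omega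
        subst hmn
        rcases hop1 with ⟨hj1, hs1, hj2, hs2⟩ | ⟨hj1, hs1, hj2, hs2⟩ <;>
          rcases hop2 with ⟨hj3, hs3, hj4, hs4⟩ | ⟨hj3, hs3, hj4, hs4⟩
        · rw [hs1] at hs4; norm_num at hs4
        · exact ⟨by rw [hj3, ← hj2], by rw [hs3, ← hs2]⟩
        · exact ⟨by rw [hj3, ← hj2], by rw [hs3, ← hs2]⟩
        · rw [hs1] at hs4; norm_num at hs4
      · -- pos value, neg value : contradiction
        exfalso
        have hvv : -((m:ℝ)^2 + m) = (n:ℝ)^2 + n := by rw [← hv1, ← hv2, h'']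
        have hZ : -(m^2 + m) = n^2 + n := by exact_mod_cast hvv
        nlinarith [sq_nonneg n, sq_nonneg m]
      · exfalso
        have hvv : (m:ℝ)^2 + m = -((n:ℝ)^2 + n) := by rw [← hv1, ← hv2, h'']
        have hZ : m^2 + m = -(n^2 + n) := by exact_mod_cast hvv
        nlinarith [sq_nonneg n, sq_nonneg m]
      · -- neg, neg
        have hvv : -((m:ℝ)^2 + m) = -((n:ℝ)^2 + n) := by rw [← hv1, ← hv2, h'']
        have hZ : -(m^2 + m) = -(n^2 + n) := by exact_mod_cast hvv
        have hmn : m = n := by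
          have h0 : (m - n) * (m + n + 1) = 0 := by linear_combination -hZ
          rcases mul_eq_zero.mp h0 with h1 | h1 <;> omega
        subst hmn
        rcases hop1 with ⟨hj1, hs1, hj2, hs2⟩ | ⟨hj1, hs1, hj2, hs2⟩ <;>
          rcases hop2 with ⟨hj3, hs3, hj4, hs4⟩ | ⟨hj3, hs3, hj4, hs4⟩
        · rw [hs1] at hs4; norm_num at hs4
        · exact ⟨by rw [hj3, ← hj2], by rw [hs3, ← hs2]⟩
        · exact ⟨by rw [hj3, ← hj2], by rw [hs3, ← hs2]⟩
        · rw [hs1] at hs4; norm_num at hs4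
end

section
/- If q ≥ 1 and there are exactly two indices ι₁ ≠ ι₂ in {0,…,q} with ω_{ι₁} = ω_{ι₂} = ω*, then R(ω₀,…,ω_q) = −( Σ_{m=0, m≠ι₁,ι₂}^{q} (ω_m − ω*)^{−1} ) · ( ∏_{k=0, k≠ι₁,ι₂}^{q} (ω_k − ω*)^{−1} ), where for q = 1 the empty sum is 0 and the empty product is 1 (so R = 0 in that case). -/
/-! The two poles at `iω*` merge into a double pole of the integrand, the other factors
`g(λ) = ∏_{m ≠ ι₁, ι₂} (λ - iω_m)⁻¹` being holomorphic on and inside `Γ`. Cauchy's formula for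
the derivative turns the integral into `2πi g'(iω*)`, and the logarithmic derivative gives
`g' = -(∑ (λ - iω_m)⁻¹) g`. Finally `(iω* - iω_m)⁻¹ = i (ω_m - ω*)⁻¹`, and the `q` resulting
powers of `i` cancel against `(-i)^q`. -/

open Finset

/-- The residue-type coefficient
`R(ω₀,…,ω_q) = ((-i)^q / (2πi)) ∮_Γ ∏ (λ - i ω_m)⁻¹ dλ`,
where `Γ` is the counterclockwise circle of radius `r` centered at `i ω*`. -/
noncomputable def Rcoef (q : ℕ) (ωs r : ℝ) (ω : Fin (q + 1) → ℝ) : ℂ :=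
  ((-Complex.I) ^ q / (2 * (Real.pi : ℂ) * Complex.I)) *
    ∮ z in C((Complex.I * (ωs : ℂ)), r), ∏ m : Fin (q + 1), (z - Complex.I * (ω m : ℂ))⁻¹

open Complex Real

section ProdInvSub

variable {ι : Type*} [DecidableEq ι]

theorem prod_inv_sub_eq_sq_inv_mul_prod_erase {𝕜 : Type*} [Field 𝕜] [Fintype ι]
    {a : ι → 𝕜} {c : 𝕜} {i j : ι} (hij : i ≠ j) (hi : a i = c) (hj : a j = c) (z : 𝕜) :
    ∏ k, (z - a k)⁻¹ = ((z - c) ^ 2)⁻¹ * ∏ k ∈ (univ.erase i).erase j, (z - a k)⁻¹ := by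
  rw [← mul_prod_erase univ _ (mem_univ i),
    ← mul_prod_erase _ _ (mem_erase.2 ⟨hij.symm, mem_univ j⟩), hi, hj, ← mul_assoc, sq, mul_inv]

theorem hasDerivAt_prod_inv_sub {𝕜 : Type*} [NontriviallyNormedField 𝕜] (S : Finset ι)
    {a : ι → 𝕜} {c : 𝕜} (hc : ∀ i ∈ S, c ≠ a i) :
    HasDerivAt (fun z ↦ ∏ i ∈ S, (z - a i)⁻¹)
      (-(∑ i ∈ S, (c - a i)⁻¹) * ∏ i ∈ S, (c - a i)⁻¹) c := by
  have hfactor (i) (hi : i ∈ S) :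
      HasDerivAt (fun z ↦ (z - a i)⁻¹) (-((c - a i) ^ 2)⁻¹) c := by
    exact ((hasDerivAt_inv (sub_ne_zero.2 (hc i hi))).comp c
      ((hasDerivAt_id c).sub_const (a i))).congr_deriv (mul_one _)
  refine (HasDerivAt.fun_finsetProd hfactor).congr_deriv ?_
  rw [neg_mul, sum_mul, ← sum_neg_distrib]
  refine sum_congr rfl fun i hi ↦ ?_
  rw [← mul_prod_erase S _ hi, smul_eq_mul, sq, mul_inv]
  ring

theorem circleIntegral_sq_inv_mul_prod_inv_sub (S : Finset ι) {a : ι → ℂ} {c : ℂ} {r : ℝ}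
    (hr : 0 < r) (hfar : ∀ i ∈ S, r < ‖a i - c‖) :
    (∮ z in C(c, r), ((z - c) ^ 2)⁻¹ * ∏ i ∈ S, (z - a i)⁻¹) =
      2 * π * I * (-(∑ i ∈ S, (c - a i)⁻¹) * ∏ i ∈ S, (c - a i)⁻¹) := by
  have hball : Metric.closedBall c r ⊆ (a '' S)ᶜ := by
    rintro z hz ⟨i, hi, rfl⟩
    have := hfar i hi
    rw [Metric.mem_closedBall, dist_eq_norm] at hz
    linarith
  have hdiff : DifferentiableOn ℂ (fun z ↦ ∏ i ∈ S, (z - a i)⁻¹) (a '' S)ᶜ :=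
    DifferentiableOn.fun_finsetProd fun i hi z hz ↦
      ((differentiableAt_id.sub_const (a i)).inv
        (sub_ne_zero.2 fun h ↦ hz ⟨i, hi, h.symm⟩)).differentiableWithinAt
  have hcauchy := two_pi_I_inv_smul_circleIntegral_sub_sq_inv_smul_of_differentiable
    (S.finite_toSet.image a).isClosed.isOpen_compl hball hdiff (Metric.mem_ball_self hr)
  have hc : ∀ i ∈ S, c ≠ a i := fun i hi h ↦ hball (Metric.mem_closedBall_self hr.le) ⟨i, hi, h.symm⟩
  rw [← (hasDerivAt_prod_inv_sub S hc).deriv, ← hcauchy, smul_eq_mul, ← mul_assoc,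
    mul_inv_cancel₀ two_pi_I_ne_zero, one_mul]
  rfl

end ProdInvSub

theorem norm_I_mul_sub_I_mul (x y : ℝ) : ‖I * x - I * y‖ = |x - y| := by
  rw [← mul_sub, norm_mul, norm_I, one_mul, ← ofReal_sub, norm_real, Real.norm_eq_abs]

theorem inv_I_mul_sub_I_mul (x y : ℂ) : (I * x - I * y)⁻¹ = I * (y - x)⁻¹ := by
  rw [← mul_sub, ← neg_sub y x, mul_neg, ← neg_mul, mul_inv, inv_neg, inv_I, neg_neg]

theorem stmt17_general (q : ℕ) (ωs r : ℝ) (ω : Fin (q + 1) → ℝ)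
    (hr0 : 0 < r) (hr : ∀ m, ω m ≠ ωs → r < |ω m - ωs|)
    (ι₁ ι₂ : Fin (q + 1)) (hne : ι₁ ≠ ι₂) (h1 : ω ι₁ = ωs) (h2 : ω ι₂ = ωs)
    (honly : ∀ m, ω m = ωs → m = ι₁ ∨ m = ι₂) :
    Rcoef q ωs r ω =
      -(∑ m ∈ (Finset.univ.erase ι₁).erase ι₂, (((ω m : ℂ) - (ωs : ℂ))⁻¹)) *
        ∏ k ∈ (Finset.univ.erase ι₁).erase ι₂, (((ω k : ℂ) - (ωs : ℂ))⁻¹) := by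
  set S := (univ.erase ι₁).erase ι₂
  have hfar : ∀ m ∈ S, r < ‖I * ω m - I * ωs‖ := by
    intro m hm
    rw [norm_I_mul_sub_I_mul]
    refine hr m fun h ↦ ?_
    rcases honly m h with rfl | rfl <;> simp [S] at hm
  have hcard : #S + 1 = q := by
    rw [card_erase_add_one (mem_erase.2 ⟨hne.symm, mem_univ ι₂⟩), card_erase_of_mem (mem_univ ι₁),
      card_fin, Nat.add_sub_cancel]
  have hpow : (-I) ^ q * (I * I ^ #S) = 1 := by
    rw [← pow_succ', hcard, ← mul_pow, neg_mul, I_mul_I, neg_neg, one_pow]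
  have hsplit := prod_inv_sub_eq_sq_inv_mul_prod_erase hne (a := fun m ↦ I * (ω m : ℂ))
    (c := I * ωs) (by simp [h1]) (by simp [h2])
  simp only [Rcoef, hsplit]
  rw [circleIntegral_sq_inv_mul_prod_inv_sub S hr0 hfar]
  simp only [inv_I_mul_sub_I_mul, ← mul_sum, prod_mul_distrib, prod_const]
  rw [← mul_assoc, div_mul_cancel₀ _ two_pi_I_ne_zero]
  linear_combination (-(∑ m ∈ S, ((ω m : ℂ) - ωs)⁻¹) * ∏ k ∈ S, ((ω k : ℂ) - ωs)⁻¹) * hpow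

theorem stmt17 (q : ℕ) (hq : 1 ≤ q) (ωs r : ℝ) (ω : Fin (q + 1) → ℝ)
    (hr0 : 0 < r) (hr : ∀ m, ω m ≠ ωs → r < |ω m - ωs|)
    (ι₁ ι₂ : Fin (q + 1)) (hne : ι₁ ≠ ι₂) (h1 : ω ι₁ = ωs) (h2 : ω ι₂ = ωs)
    (honly : ∀ m, ω m = ωs → m = ι₁ ∨ m = ι₂) :
    Rcoef q ωs r ω =
      -(∑ m ∈ (Finset.univ.erase ι₁).erase ι₂, (((ω m : ℂ) - (ωs : ℂ))⁻¹)) *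
        ∏ k ∈ (Finset.univ.erase ι₁).erase ι₂, (((ω k : ℂ) - (ωs : ℂ))⁻¹) :=
  stmt17_general q ωs r ω hr0 hr ι₁ ι₂ hne h1 h2 honly
end
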